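/- arXiv:2311.03868 — 10 statements merged into one kernel-verified Lean document; each statement's English description precedes it below -/
import Mathlib

section
/- If P and Q are B-partitions of a standard Borel space (J,B) (meaning the saturation P(A) of any Borel set A is Borel), then their join P∨Q in the partition lattice is also a B-partition. -/
open MeasureTheory

/-- The class of the partition (setoid) `s` containing `x`. -/
def Setoid.cls {J : Type*} (s : Setoid J) (x : J) : Set J := {y | s.r x y}

/-- The saturation of a set `A`: the union of all classes of `s` meeting `A`. -/
def Setoid.sat {J : Type*} (s : Setoid J) (A : Set J) : Set J := {x | ∃ y ∈ A, s.r x y}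

/-- A partition is a `B`-partition if the saturation of every Borel (measurable) set
is Borel (measurable). -/
def IsBPartition {J : Type*} [MeasurableSpace J] (s : Setoid J) : Prop :=
  ∀ A : Set J, MeasurableSet A → MeasurableSet (s.sat A)

lemma Setoid.subset_sat {J : Type*} (s : Setoid J) (A : Set J) : A ⊆ s.sat A :=
  fun x hx => ⟨x, hx, s.refl' x⟩

lemma Setoid.sat_mono {J : Type*} (s : Setoid J) {A B : Set J} (h : A ⊆ B) :
    s.sat A ⊆ s.sat B := fun _ ⟨y, hy, hr⟩ => ⟨y, h hy, hr⟩

/-- If `P` and `Q` are `B`-partitions of a standard Borel space,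
then so is their join `P ⊔ Q` in the partition lattice. -/
theorem join_isBPartition {J : Type*} [MeasurableSpace J] [StandardBorelSpace J]
    (P Q : Setoid J) (hP : IsBPartition P) (hQ : IsBPartition Q) :
    IsBPartition (P ⊔ Q) := by
  intro A hA
  set f : ℕ → Set J := fun n => (fun S => Q.sat (P.sat S))^[n] A with hf
  have hsucc : ∀ n, f (n + 1) = Q.sat (P.sat (f n)) := by
    intro n
    simp [hf, Function.iterate_succ_apply']
  have hmeas : ∀ n, MeasurableSet (f n) := by
    intro n
    induction n with
    | zero => exact hA
    | succ n ih => rw [hsucc]; exact hQ _ (hP _ ih)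
  set U : Set J := ⋃ n, f n with hU
  have hsub : ∀ n, f n ⊆ U := fun n => Set.subset_iUnion f n
  have hPU : P.sat U ⊆ U := by
    rintro x ⟨y, hy, hr⟩
    obtain ⟨n, hn⟩ := Set.mem_iUnion.1 hy
    refine hsub (n + 1) ?_
    rw [hsucc]
    exact Q.subset_sat _ ⟨y, hn, hr⟩
  have hQU : Q.sat U ⊆ U := by
    rintro x ⟨y, hy, hr⟩
    obtain ⟨n, hn⟩ := Set.mem_iUnion.1 hy
    refine hsub (n + 1) ?_
    rw [hsucc]
    exact ⟨y, P.subset_sat _ hn, hr⟩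
  -- key: closure under single steps, both directions
  have step : ∀ x y : J, (P x y ∨ Q x y) → (y ∈ U → x ∈ U) := by
    rintro x y (h | h) hy
    · exact hPU ⟨y, hy, h⟩
    · exact hQU ⟨y, hy, h⟩
  have key : ∀ x y : J, Relation.EqvGen (fun a b => P a b ∨ Q a b) x y → (x ∈ U ↔ y ∈ U) := by
    intro x y h
    induction h with
    | rel a b hab =>
      constructor
      · exact step b a (by rcases hab with h | h; exacts [Or.inl (P.symm' h), Or.inr (Q.symm' h)])
      · exact step a b hab
    | refl a => rfl
    | symm a b _ ih => exact ih.symm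
    | trans a b c _ _ ih1 ih2 => exact ih1.trans ih2
  have hEq : (P ⊔ Q).sat A = U := by
    ext x
    constructor
    · rintro ⟨y, hy, hr⟩
      rw [Setoid.sup_eq_eqvGen] at hr
      exact (key x y hr).2 (hsub 0 hy)
    · intro hx
      obtain ⟨n, hn⟩ := Set.mem_iUnion.1 hx
      clear hx
      induction n generalizing x with
      | zero => exact ⟨x, hn, (P ⊔ Q).refl' x⟩
      | succ n ih =>
        rw [hsucc] at hn
        obtain ⟨y, ⟨z, hz, hPz⟩, hQy⟩ := hn
        obtain ⟨w, hw, hr⟩ := ih z hz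
        exact ⟨w, hw, (P ⊔ Q).trans'
          ((P ⊔ Q).trans' (Setoid.le_def.1 le_sup_right hQy) (Setoid.le_def.1 le_sup_left hPz))
          hr⟩
  rw [hEq]
  exact MeasurableSet.iUnion hmeas
end

section
/- If P is a B-partition of a standard Borel space and Q is a B-partition with countably many classes, then the meet P∧Q (the partition into nonempty intersections of classes) is a B-partition. -/
open MeasureTheory

lemma inf_rel {J : Type*} (P Q : Setoid J) (x y : J) :
    (P ⊓ Q).r x y ↔ P.r x y ∧ Q.r x y := Iff.rfl

/-- If `P` is a `B`-partition and `Q` is a `B`-partition with countably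
many classes, then the meet `P ⊓ Q` (the common refinement, whose classes are the nonempty
intersections of classes) is a `B`-partition. -/
theorem meet_isBPartition {J : Type*} [MeasurableSpace J] [StandardBorelSpace J]
    (P Q : Setoid J) (hP : IsBPartition P) (hQ : IsBPartition Q)
    (hQc : Countable (Quotient Q)) :
    IsBPartition (P ⊓ Q) := by
  intro A hA
  have key : (P ⊓ Q).sat A =
      ⋃ c : Quotient Q, (Q.sat {c.out} ∩ P.sat (A ∩ Q.sat {c.out})) := by
    ext x
    simp only [Setoid.sat, Set.mem_setOf_eq, Set.mem_iUnion, Set.mem_inter_iff,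
      Set.mem_singleton_iff]
    constructor
    · rintro ⟨y, hyA, hPxy, hQxy⟩
      refine ⟨Quotient.mk _ x, ⟨Quotient.mk _ x |>.out, rfl, Q.symm (Quotient.mk_out x)⟩,
        y, ⟨hyA, ?_⟩, hPxy⟩
      exact ⟨(Quotient.mk _ x).out, rfl, Q.trans (Q.symm hQxy) (Q.symm (Quotient.mk_out x))⟩
    · rintro ⟨c, ⟨z, rfl, hxz⟩, y, ⟨hyA, w, rfl, hyw⟩, hPxy⟩
      exact ⟨y, hyA, hPxy, Q.trans hxz (Q.symm hyw)⟩
  rw [key]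
  exact MeasurableSet.iUnion fun c =>
    (hQ _ (measurableSet_singleton _)).inter
      (hP _ (hA.inter (hQ _ (measurableSet_singleton _))))
end

section
/- Let P be a B-partition of a standard Borel space (J,B) and A ∈ B. For each k ∈ {0,1,2,...} ∪ {∞}, the set A_k, the union of all classes P' ∈ P with |P' ∩ A| = k, is Borel. -/
open MeasureTheory

lemma sat_eq_one_le {J : Type*} (P : Setoid J) (B : Set J) :
    P.sat B = {x | (1 : ℕ∞) ≤ (P.cls x ∩ B).encard} := by
  ext x
  simp only [Setoid.sat, Set.mem_setOf_eq, Set.one_le_encard_iff_nonempty]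
  constructor
  · rintro ⟨y, hyB, hxy⟩; exact ⟨y, hxy, hyB⟩
  · rintro ⟨y, hxy, hyB⟩; exact ⟨y, hyB, hxy⟩

lemma ge_count_measurable {J : Type*} [MeasurableSpace J]
    (P : Setoid J) (hP : IsBPartition P) (f : J → ℝ) (hf : MeasurableEmbedding f) :
    ∀ (m : ℕ) (B : Set J), MeasurableSet B →
      MeasurableSet {x | (m : ℕ∞) ≤ (P.cls x ∩ B).encard} := by
  intro m
  induction m using Nat.strong_induction_on with
  | _ m ih =>
    match m with
    | 0 =>
      intro B hB
      have : {x | ((0 : ℕ) : ℕ∞) ≤ (P.cls x ∩ B).encard} = Set.univ := by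
        ext x; simp
      rw [this]; exact MeasurableSet.univ
    | 1 =>
      intro B hB
      have : {x | ((1 : ℕ) : ℕ∞) ≤ (P.cls x ∩ B).encard} = P.sat B := by
        rw [Nat.cast_one]; exact (sat_eq_one_le P B).symm
      rw [this]; exact hP B hB
    | (m + 2) =>
      intro B hB
      have key : {x | ((m + 2 : ℕ) : ℕ∞) ≤ (P.cls x ∩ B).encard} =
          ⋃ (q : ℚ) (a : ℕ),
            ({x | ((min a m + 1 : ℕ) : ℕ∞) ≤ (P.cls x ∩ (B ∩ f ⁻¹' Set.Iio (q : ℝ))).encard} ∩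
             {x | ((m + 1 - min a m : ℕ) : ℕ∞) ≤ (P.cls x ∩ (B ∩ f ⁻¹' Set.Ici (q : ℝ))).encard}) := by
        ext x
        simp only [Set.mem_setOf_eq, Set.mem_iUnion, Set.mem_inter_iff]
        constructor
        · intro h
          set S := P.cls x ∩ B with hS
          -- get two distinct points
          have hnt : 1 < S.encard := by
            calc (1 : ℕ∞) < ((m + 2 : ℕ) : ℕ∞) := by
                  exact_mod_cast Nat.lt_of_lt_of_le (by norm_num) (Nat.le_add_left 2 m)
              _ ≤ S.encard := h
          obtain ⟨y, z, hy, hz, hyz⟩ := Set.one_lt_encard_iff.mp hnt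
          have hfyz : f y ≠ f z := fun hc => hyz (hf.injective hc)
          -- wlog f y < f z
          obtain ⟨y, hy, z, hz, hlt⟩ :
              ∃ y ∈ S, ∃ z ∈ S, f y < f z := by
            rcases lt_or_gt_of_ne hfyz with h1 | h1
            · exact ⟨y, hy, z, hz, h1⟩
            · exact ⟨z, hz, y, hy, h1⟩
          obtain ⟨q, hq1, hq2⟩ := exists_rat_btwn hlt
          set S1 := P.cls x ∩ (B ∩ f ⁻¹' Set.Iio (q : ℝ)) with hS1
          set S2 := P.cls x ∩ (B ∩ f ⁻¹' Set.Ici (q : ℝ)) with hS2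
          have hyS1 : y ∈ S1 := ⟨hy.1, hy.2, hq1⟩
          have hzS2 : z ∈ S2 := ⟨hz.1, hz.2, le_of_lt hq2⟩
          have hdisj : Disjoint S1 S2 := by
            apply Set.disjoint_left.mpr
            rintro w ⟨-, -, hw1⟩ ⟨-, -, hw2⟩
            exact absurd (show (q:ℝ) ≤ f w from hw2) (not_le.mpr (show f w < (q:ℝ) from hw1))
          have hunion : S1 ∪ S2 = S := by
            ext w
            simp only [hS1, hS2, hS, Set.mem_union, Set.mem_inter_iff, Set.mem_preimage,
              Set.mem_Iio, Set.mem_Ici]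
            constructor
            · rintro (⟨h1, h2, -⟩ | ⟨h1, h2, -⟩) <;> exact ⟨h1, h2⟩
            · rintro ⟨h1, h2⟩
              rcases lt_or_ge (f w) (q : ℝ) with h3 | h3
              · exact Or.inl ⟨h1, h2, h3⟩
              · exact Or.inr ⟨h1, h2, h3⟩
          have hsum : S1.encard + S2.encard = S.encard := by
            rw [← Set.encard_union_eq hdisj, hunion]
          have h1le : (1 : ℕ∞) ≤ S1.encard := Set.one_le_encard_iff_nonempty.mpr ⟨y, hyS1⟩
          have h2le : (1 : ℕ∞) ≤ S2.encard := Set.one_le_encard_iff_nonempty.mpr ⟨z, hzS2⟩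
          rcases le_or_gt ((m + 1 : ℕ) : ℕ∞) S1.encard with hc | hc
          · refine ⟨q, m, ?_, ?_⟩
            · simpa [min_self] using hc
            · simpa [min_self] using h2le
          · -- S1.encard finite, ≤ m
            have hS1top : S1.encard ≠ ⊤ := by
              intro hc'; rw [hc'] at hc; exact absurd hc (not_lt.mpr le_top)
            obtain ⟨c, hc'⟩ := WithTop.ne_top_iff_exists.mp hS1top
            have hc1 : 1 ≤ c := by
              have h1le' := h1le
              rw [← hc', ← Nat.cast_one] at h1le'
              exact Nat.cast_le.mp h1le'
            have hcm : c ≤ m := by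
              rw [← hc'] at hc
              have := Nat.cast_lt.mp hc
              omega
            refine ⟨q, c - 1, ?_, ?_⟩
            · have : min (c - 1) m + 1 = c := by omega
              rw [this, ← hc']
              exact le_refl _
            · have hmin : m + 1 - min (c - 1) m = m + 2 - c := by omega
              rw [hmin]
              rcases eq_or_ne S2.encard ⊤ with h2t | h2t
              · rw [h2t]; exact le_top
              · obtain ⟨d, hd⟩ := WithTop.ne_top_iff_exists.mp h2t
                have : ((m + 2 : ℕ) : ℕ∞) ≤ ((c + d : ℕ) : ℕ∞) := by
                  rw [← hsum, ← hc', ← hd] at h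
                  push_cast
                  push_cast at h
                  exact h
                have hmd := Nat.cast_le.mp this
                rw [← hd]
                exact Nat.cast_le.mpr (by omega)
        · rintro ⟨q, a, h1, h2⟩
          set S1 := P.cls x ∩ (B ∩ f ⁻¹' Set.Iio (q : ℝ)) with hS1
          set S2 := P.cls x ∩ (B ∩ f ⁻¹' Set.Ici (q : ℝ)) with hS2
          have hdisj : Disjoint S1 S2 := by
            apply Set.disjoint_left.mpr
            rintro w ⟨-, -, hw1⟩ ⟨-, -, hw2⟩
            exact absurd (show (q:ℝ) ≤ f w from hw2) (not_le.mpr (show f w < (q:ℝ) from hw1))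
          have hunion : S1 ∪ S2 = P.cls x ∩ B := by
            ext w
            simp only [hS1, hS2, Set.mem_union, Set.mem_inter_iff, Set.mem_preimage,
              Set.mem_Iio, Set.mem_Ici]
            constructor
            · rintro (⟨h1, h2, -⟩ | ⟨h1, h2, -⟩) <;> exact ⟨h1, h2⟩
            · rintro ⟨hw1, hw2⟩
              rcases lt_or_ge (f w) (q : ℝ) with h3 | h3
              · exact Or.inl ⟨hw1, hw2, h3⟩
              · exact Or.inr ⟨hw1, hw2, h3⟩
          calc ((m + 2 : ℕ) : ℕ∞) ≤ ((min a m + 1 : ℕ) : ℕ∞) + ((m + 1 - min a m : ℕ) : ℕ∞) := by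
                have : m + 2 ≤ (min a m + 1) + (m + 1 - min a m) := by omega
                exact_mod_cast this
            _ ≤ S1.encard + S2.encard := add_le_add h1 h2
            _ = (P.cls x ∩ B).encard := by rw [← Set.encard_union_eq hdisj, hunion]
      rw [key]
      apply MeasurableSet.iUnion; intro q
      apply MeasurableSet.iUnion; intro a
      exact (ih (min a m + 1) (by omega) _ (hB.inter (hf.measurable measurableSet_Iio))).inter
        (ih (m + 1 - min a m) (by omega) _ (hB.inter (hf.measurable measurableSet_Ici)))

/-- Let `P` be a `B`-partition of a standard Borel space and `A` Borel.
For every `k ∈ ℕ ∪ {∞}`, the set `A_k`, the union of all classes `P'` of `P` with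
`|P' ∩ A| = k`, is Borel. -/
theorem classes_with_k_points_measurable {J : Type*} [MeasurableSpace J]
    [StandardBorelSpace J] (P : Setoid J) (hP : IsBPartition P)
    (A : Set J) (hA : MeasurableSet A) (k : ℕ∞) :
    MeasurableSet {x | (P.cls x ∩ A).encard = k} := by
  obtain ⟨f, hf⟩ := exists_measurableEmbedding_real J
  have hge := ge_count_measurable P hP f hf
  cases k with
  | top =>
    have : {x | (P.cls x ∩ A).encard = ⊤} =
        ⋂ (m : ℕ), {x | (m : ℕ∞) ≤ (P.cls x ∩ A).encard} := by
      ext x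
      simp only [Set.mem_setOf_eq, Set.mem_iInter]
      constructor
      · intro h m; rw [h]; exact le_top
      · intro h
        by_contra hc
        obtain ⟨c, hcc⟩ := WithTop.ne_top_iff_exists.mp hc
        have := h (c + 1)
        rw [← hcc] at this
        have := Nat.cast_le.mp this
        omega
    rw [this]
    exact MeasurableSet.iInter fun m => hge m A hA
  | coe n =>
    have : {x | (P.cls x ∩ A).encard = (n : ℕ∞)} =
        {x | (n : ℕ∞) ≤ (P.cls x ∩ A).encard} \
          {x | ((n + 1 : ℕ) : ℕ∞) ≤ (P.cls x ∩ A).encard} := by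
      ext x
      simp only [Set.mem_setOf_eq, Set.mem_diff]
      constructor
      · intro h
        rw [h]
        refine ⟨le_refl _, ?_⟩
        intro hc
        have : ((n + 1 : ℕ) : ℕ∞) ≤ ((n : ℕ) : ℕ∞) := hc
        have := Nat.cast_le.mp this
        omega
      · rintro ⟨h1, h2⟩
        rcases eq_or_ne (P.cls x ∩ A).encard ⊤ with ht | ht
        · exfalso; apply h2; rw [ht]; exact le_top
        · obtain ⟨c, hcc⟩ := WithTop.ne_top_iff_exists.mp ht
          rw [← hcc] at h1 h2 ⊢
          have h1' := Nat.cast_le.mp h1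
          have h2' : ¬ (n + 1 ≤ c) := fun hc => h2 (Nat.cast_le.mpr hc)
          congr 1
          omega
    rw [this]
    exact (hge n A hA).diff (hge (n + 1) A hA)
end

section
/- For any B-partition P of a standard Borel space, the function x ↦ |P_x| (cardinality of the partition class containing x, with value ∞ for infinite classes) is Borel measurable; in particular, the union of all finite classes of P is a Borel set. -/
open MeasureTheory

open TopologicalSpace in
/-- A set has at least `k` elements iff there are `k` pairwise disjoint basic open
sets, each meeting it. -/
lemma encard_ge_iff_basis {J : Type*} [TopologicalSpace J] [T2Space J]
    [SecondCountableTopology J] (S : Set J) (k : ℕ) :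
    (k : ℕ∞) ≤ S.encard ↔
      ∃ U : Fin k → Set J, (∀ i, U i ∈ countableBasis J) ∧
        (∀ i j, i ≠ j → Disjoint (U i) (U j)) ∧ ∀ i, (S ∩ U i).Nonempty := by
  constructor
  · intro hk
    obtain ⟨t, htS, htk⟩ := Set.exists_subset_encard_eq hk
    have htf : t.Finite := Set.finite_of_encard_eq_coe htk
    haveI : Finite t := htf.to_subtype
    have hcard : Nat.card t = k := by
      have h1 : t.ncard = k := by
        rw [Set.ncard_def, htk]; simp
      rwa [Nat.card_coe_set_eq]
    let e : t ≃ Fin k := Finite.equivFinOfCardEq hcard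
    obtain ⟨V, hV, hVd⟩ := htf.t2_separation
    set p : Fin k → J := fun i => (e.symm i : J) with hp
    have hpmem : ∀ i, p i ∈ t := fun i => (e.symm i).2
    have hpinj : Function.Injective p := fun i j hij => by
      have := Subtype.coe_injective hij
      simpa using e.symm.injective this
    choose W hWB hpW hWV using fun i =>
      (isBasis_countableBasis J).exists_subset_of_mem_open (hV (p i)).1 (hV (p i)).2
    refine ⟨W, hWB, fun i j hij => ?_, fun i => ⟨p i, htS (hpmem i), hpW i⟩⟩
    have hd : Disjoint (V (p i)) (V (p j)) :=
      hVd (hpmem i) (hpmem j) (fun h => hij (hpinj h))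
    exact hd.mono (hWV i) (hWV j)
  · rintro ⟨U, _hUB, hUd, hUne⟩
    choose y hyS hyU using hUne
    have hyinj : Function.Injective y := by
      intro i j hij
      by_contra hne
      exact (hUd i j hne).le_bot ⟨hyU i, hij ▸ hyU j⟩
    calc (k : ℕ∞) = (Set.range y).encard := by
          rw [← Set.image_univ, hyinj.encard_image, Set.encard_univ]
          simp
      _ ≤ S.encard := Set.encard_mono (Set.range_subset_iff.2 hyS)

/-- For a `B`-partition `P` of a standard Borel space, the function
`x ↦ |P_x|` (cardinality of the class containing `x`, with value `∞` for infinite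
classes) is Borel measurable; in particular, the union of the finite classes of `P`
is a Borel set. -/
theorem card_class_measurable {J : Type*} [MeasurableSpace J] [StandardBorelSpace J]
    (P : Setoid J) (hP : IsBPartition P) :
    Measurable (fun x => (P.cls x).encard) ∧ MeasurableSet {x | (P.cls x).Finite} := by
  letI := upgradeStandardBorel J
  have hBc : (TopologicalSpace.countableBasis J).Countable :=
    TopologicalSpace.countable_countableBasis J
  haveI := hBc.to_subtype
  have key : ∀ k : ℕ, MeasurableSet {x | (k : ℕ∞) ≤ (P.cls x).encard} := by
    intro k
    have heq : {x | (k : ℕ∞) ≤ (P.cls x).encard} =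
        ⋃ (U : Fin k → ↥(TopologicalSpace.countableBasis J))
          (_ : ∀ i j, i ≠ j → Disjoint (U i : Set J) (U j)),
          ⋂ i, P.sat (U i) := by
      ext x
      simp only [Set.mem_setOf_eq, Set.mem_iUnion, Set.mem_iInter]
      rw [encard_ge_iff_basis]
      constructor
      · rintro ⟨U, hUB, hUd, hUne⟩
        refine ⟨fun i => ⟨U i, hUB i⟩, hUd, fun i => ?_⟩
        obtain ⟨y, hyS, hyU⟩ := hUne i
        exact ⟨y, hyU, hyS⟩
      · rintro ⟨U, hUd, hsat⟩
        refine ⟨fun i => (U i : Set J), fun i => (U i).2, hUd, fun i => ?_⟩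
        obtain ⟨y, hyU, hr⟩ := hsat i
        exact ⟨y, hr, hyU⟩
    rw [heq]
    exact MeasurableSet.iUnion fun U => MeasurableSet.iUnion fun _ =>
      MeasurableSet.iInter fun i =>
        hP _ ((TopologicalSpace.isOpen_of_mem_countableBasis (U i).2).measurableSet)
  have hmeas : Measurable (fun x => (P.cls x).encard) := by
    apply measurable_to_countable'
    intro c
    induction c using ENat.recTopCoe with
    | top =>
      have : (fun x => (P.cls x).encard) ⁻¹' {⊤} =
          ⋂ n : ℕ, {x | (n : ℕ∞) ≤ (P.cls x).encard} := by
        ext x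
        simp only [Set.mem_preimage, Set.mem_singleton_iff, Set.mem_iInter, Set.mem_setOf_eq]
        constructor
        · intro h n; rw [h]; exact le_top
        · intro h
          by_contra hne
          lift (P.cls x).encard to ℕ using hne with m hm
          have := h (m + 1)
          exact absurd (Nat.cast_le.1 this) (by omega)
      rw [this]
      exact MeasurableSet.iInter fun n => key n
    | coe n =>
      have : (fun x => (P.cls x).encard) ⁻¹' {(n : ℕ∞)} =
          {x | (n : ℕ∞) ≤ (P.cls x).encard} \ {x | ((n + 1 : ℕ) : ℕ∞) ≤ (P.cls x).encard} := by
        ext x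
        simp only [Set.mem_preimage, Set.mem_singleton_iff, Set.mem_diff, Set.mem_setOf_eq]
        constructor
        · intro h
          refine ⟨h.ge, fun hle => ?_⟩
          rw [h] at hle
          exact absurd (Nat.cast_le.1 hle) (by omega)
        · rintro ⟨h1, h2⟩
          refine le_antisymm ?_ h1
          have : (P.cls x).encard < ((n : ℕ∞) + 1) := by
            push_cast at h2 ⊢
            exact lt_of_not_ge h2
          exact (ENat.lt_add_one_iff (by simp)).1 this
      rw [this]
      exact (key n).diff (key (n + 1))
  refine ⟨hmeas, ?_⟩
  have : {x | (P.cls x).Finite} = (fun x => (P.cls x).encard) ⁻¹' {⊤}ᶜ := by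
    ext x
    simp [Set.encard_ne_top_iff]
  rw [this]
  exact hmeas (measurableSet_singleton ⊤).compl
end

section
/- Every B-partition P of a standard Borel space has a finite-class representative: a Borel set S such that |S ∩ P'| = 1 for every finite class P' ∈ P and S ∩ P' = ∅ for every infinite class P' ∈ P. -/
open MeasureTheory

lemma mem_sat_iff {J : Type*} (s : Setoid J) (A : Set J) (x : J) :
    x ∈ s.sat A ↔ ∃ y ∈ A, s.r x y := Iff.rfl

lemma mem_cls_iff {J : Type*} (s : Setoid J) (x y : J) :
    y ∈ s.cls x ↔ s.r x y := Iff.rfl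

lemma cls_eq_of_rel {J : Type*} (s : Setoid J) {x y : J} (h : s.r x y) :
    s.cls x = s.cls y := by
  ext z
  exact ⟨fun hz => s.trans (s.symm h) hz, fun hz => s.trans h hz⟩

/-- A finite set of reals has a positive minimal gap, so sufficiently close distinct
pairs force infiniteness. -/
lemma infinite_of_arbitrarily_close_pairs {T : Set ℝ}
    (h : ∀ n : ℕ, ∃ u ∈ T, ∃ v ∈ T, u ≠ v ∧ |u - v| < 2 * (1 / (n + 1))) :
    T.Infinite := by
  by_contra hfin
  rw [Set.not_infinite] at hfin
  -- the set of positive distances between points of T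
  set D : Set ℝ := {d : ℝ | 0 < d ∧ ∃ u ∈ T, ∃ v ∈ T, |u - v| = d} with hD
  have hDfin : D.Finite := by
    apply (hfin.image2 (fun u v => |u - v|) hfin).subset
    rintro d ⟨-, u, hu, v, hv, rfl⟩
    exact Set.mem_image2_of_mem hu hv
  have hDne : D.Nonempty := by
    obtain ⟨u, hu, v, hv, huv, hlt⟩ := h 0
    exact ⟨|u - v|, abs_pos.2 (sub_ne_zero.2 huv), u, hu, v, hv, rfl⟩
  obtain ⟨m, hmD, hmin⟩ := Set.exists_min_image D id hDfin hDne
  have hm : 0 < m := hmD.1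
  obtain ⟨n, hn⟩ := exists_nat_one_div_lt (show (0:ℝ) < m / 2 by linarith)
  obtain ⟨u, hu, v, hv, huv, hlt⟩ := h n
  have hd : |u - v| ∈ D := ⟨abs_pos.2 (sub_ne_zero.2 huv), u, hu, v, hv, rfl⟩
  have := hmin _ hd
  simp only [id] at this
  have : m ≤ |u - v| := this
  have hn' : (1 : ℝ) / (n + 1) < m / 2 := by exact_mod_cast hn
  linarith

/-- Every `B`-partition `P` of a standard Borel space has a finite-class
representative: a Borel set `S` meeting every finite class of `P` in exactly one point and
every infinite class in no point. -/
theorem exists_finite_class_representative {J : Type*} [MeasurableSpace J]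
    [StandardBorelSpace J] (P : Setoid J) (hP : IsBPartition P) :
    ∃ S : Set J, MeasurableSet S ∧
      (∀ x : J, (P.cls x).Finite → (S ∩ P.cls x).encard = 1) ∧
      (∀ x : J, (P.cls x).Infinite → S ∩ P.cls x = ∅) := by
  classical
  obtain ⟨f, hf⟩ := exists_measurableEmbedding_real J
  set g : J → ℝ := fun x => Real.arctan (f x) with hg
  have hg_meas : Measurable g := Real.measurable_arctan.comp hf.measurable
  have hg_inj : Function.Injective g :=
    fun a b hab => hf.injective (Real.arctan_injective hab)
  have hg_bdd : ∀ x, g x ∈ Set.Icc (-2 : ℝ) 2 := by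
    intro x
    have h1 := Real.neg_pi_div_two_lt_arctan (f x)
    have h2 := Real.arctan_lt_pi_div_two (f x)
    have hπ := Real.pi_le_four
    constructor <;> simp only [hg] <;> nlinarith [Real.pi_pos]
  set ε : ℕ → ℝ := fun n => 1 / (n + 1) with hε
  have hεpos : ∀ n, 0 < ε n := fun n => by positivity
  -- the union of all infinite classes
  set Inf : Set J := ⋂ n : ℕ, ⋃ q : ℚ,
      (P.sat (g ⁻¹' Set.Ioo ((q : ℝ) - ε n) q) ∩
        P.sat (g ⁻¹' Set.Ioo (q : ℝ) ((q : ℝ) + ε n))) with hInf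
  have hInf_meas : MeasurableSet Inf := by
    apply MeasurableSet.iInter
    intro n
    apply MeasurableSet.iUnion
    intro q
    exact (hP _ (hg_meas measurableSet_Ioo)).inter (hP _ (hg_meas measurableSet_Ioo))
  -- membership in Inf characterizes infinite classes
  have key : ∀ x : J, x ∈ Inf ↔ (P.cls x).Infinite := by
    intro x
    constructor
    · -- if x ∈ Inf then cls x is infinite
      intro hx
      have hT : (g '' P.cls x).Infinite := by
        apply infinite_of_arbitrarily_close_pairs
        intro n
        have hxn := Set.mem_iInter.1 hx n
        obtain ⟨q, hq⟩ := Set.mem_iUnion.1 hxn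
        obtain ⟨⟨y, hy, hry⟩, ⟨z, hz, hrz⟩⟩ := hq
        refine ⟨g y, ⟨y, hry, rfl⟩, g z, ⟨z, hrz, rfl⟩, ?_, ?_⟩
        · intro h
          have := hy.2
          rw [h] at this
          exact absurd hz.1 (not_lt.2 this.le)
        · have h1 := hy.1; have h2 := hy.2; have h3 := hz.1; have h4 := hz.2
          rw [abs_sub_lt_iff]
          constructor <;> simp only [Set.mem_preimage] at * <;> linarith
      intro hcon
      exact hT (hcon.image g)
    · -- if cls x is infinite, then x ∈ Inf
      intro hx
      have hT : (g '' P.cls x).Infinite := by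
        apply Set.Infinite.image ?_ hx
        intro a _ b _ hab
        exact hg_inj hab
      obtain ⟨r, -, hr⟩ := hT.exists_accPt_of_subset_isCompact isCompact_Icc
        (by rintro t ⟨y, -, rfl⟩; exact hg_bdd y)
      rw [accPt_iff_nhds] at hr
      apply Set.mem_iInter.2
      intro n
      -- find two distinct points of g '' cls x within ε n / 4 of r
      obtain ⟨u, ⟨hu1, hu2⟩, hune⟩ := hr (Metric.ball r (ε n / 4))
        (Metric.ball_mem_nhds r (by positivity))
      have hdu : 0 < dist u r := dist_pos.2 hune
      obtain ⟨v, ⟨hv1, hv2⟩, hvne⟩ := hr (Metric.ball r (dist u r))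
        (Metric.ball_mem_nhds r hdu)
      have hvu : v ≠ u := by
        intro h
        rw [h] at hv1
        exact absurd hv1 (by simp [Metric.mem_ball])
      have hclose : |u - v| < ε n / 2 := by
        have h1 : |u - r| < ε n / 4 := by simpa [Real.dist_eq] using hu1
        have h2 : |v - r| < ε n / 4 := by
          have : dist v r < dist u r := hv1
          have h3 : dist u r < ε n / 4 := hu1
          calc |v - r| = dist v r := (Real.dist_eq v r).symm
            _ < dist u r := hv1
            _ < ε n / 4 := hu1
        calc |u - v| = |(u - r) - (v - r)| := by ring_nf
          _ ≤ |u - r| + |v - r| := abs_sub _ _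
          _ < ε n / 2 := by linarith
      -- wlog via min/max
      have main : ∀ a b : ℝ, a ∈ g '' P.cls x → b ∈ g '' P.cls x → a < b →
          b - a < ε n / 2 → x ∈ ⋃ q : ℚ,
            (P.sat (g ⁻¹' Set.Ioo ((q : ℝ) - ε n) q) ∩
              P.sat (g ⁻¹' Set.Ioo (q : ℝ) ((q : ℝ) + ε n))) := by
        rintro a b ⟨y, hy, rfl⟩ ⟨z, hz, rfl⟩ hab hsmall
        obtain ⟨q, hq1, hq2⟩ := exists_rat_btwn hab
        apply Set.mem_iUnion.2
        refine ⟨q, ⟨y, ?_, hy⟩, ⟨z, ?_, hz⟩⟩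
        · simp only [Set.mem_preimage, Set.mem_Ioo]
          constructor <;> linarith
        · simp only [Set.mem_preimage, Set.mem_Ioo]
          constructor <;> linarith
      obtain ⟨hc1, hc2⟩ := abs_lt.1 hclose
      rcases lt_or_gt_of_ne hvu with h | h
      · exact main v u hv2 hu2 h (by linarith)
      · exact main u v hu2 hv2 h (by linarith)
  -- the set of minima of classes
  set M : Set J := {x | ∀ y, P.r x y → g x ≤ g y} with hM
  have hM_meas : MeasurableSet M := by
    have hcompl : Mᶜ = ⋃ q : ℚ, (P.sat (g ⁻¹' Set.Iio (q : ℝ)) ∩ g ⁻¹' Set.Ioi (q : ℝ)) := by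
      ext x
      simp only [Set.mem_compl_iff, hM, Set.mem_setOf_eq, not_forall, Set.mem_iUnion,
        Set.mem_inter_iff, mem_sat_iff, Set.mem_preimage, Set.mem_Iio, Set.mem_Ioi]
      constructor
      · rintro ⟨y, hry, hlt⟩
        push_neg at hlt
        obtain ⟨q, hq1, hq2⟩ := exists_rat_btwn hlt
        exact ⟨q, ⟨y, hq1, hry⟩, hq2⟩
      · rintro ⟨q, ⟨y, hyq, hry⟩, hq⟩
        exact ⟨y, hry, by push_neg; linarith⟩
    rw [← compl_compl M, hcompl]
    exact (MeasurableSet.iUnion fun q =>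
      (hP _ (hg_meas measurableSet_Iio)).inter (hg_meas measurableSet_Ioi)).compl
  refine ⟨M \ Inf, hM_meas.diff hInf_meas, ?_, ?_⟩
  · -- finite classes: exactly one point
    intro x hx
    have hxx : x ∈ P.cls x := P.refl x
    obtain ⟨m, hm, hmin⟩ := Set.exists_min_image (P.cls x) g hx ⟨x, hxx⟩
    have hclsm : P.cls m = P.cls x := (cls_eq_of_rel P hm).symm
    rw [Set.encard_eq_one]
    refine ⟨m, ?_⟩
    ext y
    simp only [Set.mem_inter_iff, Set.mem_diff, Set.mem_singleton_iff]
    constructor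
    · rintro ⟨⟨hyM, -⟩, hyc⟩
      -- y is a minimum of cls x, so g y = g m
      have h1 : g y ≤ g m := hyM m (P.trans (P.symm hyc) hm)
      have h2 : g m ≤ g y := hmin y hyc
      exact hg_inj (le_antisymm h1 h2)
    · rintro rfl
      refine ⟨⟨?_, ?_⟩, hm⟩
      · intro z hrz
        exact hmin z (P.trans hm hrz)
      · intro hmem
        have h := (key _).1 hmem
        rw [hclsm] at h
        exact h hx
  · -- infinite classes: empty intersection
    intro x hx
    ext y
    simp only [Set.mem_inter_iff, Set.mem_diff, Set.mem_empty_iff_false, iff_false, not_and]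
    rintro ⟨-, hyInf⟩ hyc
    apply hyInf
    apply (key y).2
    rw [cls_eq_of_rel P hyc] at hx
    exact hx
end

section
/- Let P be a B-partition of a standard Borel probability space (J,B,π) with the re-randomizing property, and let f : J → ℝ be integrable with f(x) = 0 whenever P_x is infinite and Σ_{x∈P'} f(x) = 0 for every finite class P' ∈ P. Then ∫_J f dπ = 0. -/
open MeasureTheory

open scoped Classical

/-- The probability that, picking a `π`-random point and re-randomizing it along `s`
(i.e. replacing it by a uniform random point of its class when that class is finite,
keeping it otherwise), the resulting point lies in `A`. -/
noncomputable def rerandProb {J : Type*} [MeasurableSpace J] (s : Setoid J)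
    (π : MeasureTheory.Measure J) (A : Set J) : ℝ :=
  ∫ x, (if (s.cls x).Finite then (Nat.card ↥(s.cls x ∩ A) : ℝ) / (Nat.card ↥(s.cls x))
        else A.indicator 1 x) ∂π

/-- A partition `s` has the re-randomizing property with respect to `π` if re-randomizing
a `π`-random point along `s` again yields a point distributed according to `π`. -/
def HasRerand {J : Type*} [MeasurableSpace J] (s : Setoid J)
    (π : MeasureTheory.Measure J) : Prop :=
  ∀ A : Set J, MeasurableSet A → rerandProb s π A = (π A).toReal

/-!
The re-randomization operator acts on functions by the class average
`T g x = (∑_{y ∈ P_x} g y) / |P_x|` (and `T g x = g x` on infinite classes). The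
re-randomizing property says `∫ T 1_A dπ = π A` for Borel `A`, so `∫ T g dπ = ∫ g dπ` for simple
`g` by linearity, for nonnegative measurable integrable `g` by monotone convergence (`T` is
monotone and commutes with pointwise limits), and for all integrable `g` by splitting into positive
and negative parts and noting that `T` preserves `π`-a.e. equality: for a null set `N`,
`∫ T 1_N dπ = π N = 0`, so almost every class misses `N`. Under the hypotheses on `f` we have
`T f = 0` everywhere, hence `∫ f dπ = 0`.
-/

open Filter Topology

theorem exists_simpleFunc_monotone_tendsto_of_nonneg {α : Type*} [MeasurableSpace α]
    {h : α → ℝ} (hm : Measurable h) (h0 : ∀ x, 0 ≤ h x) :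
    ∃ t : ℕ → SimpleFunc α ℝ, (∀ n x, 0 ≤ t n x) ∧ (∀ x, Monotone fun n ↦ t n x) ∧
      ∀ x, Tendsto (fun n ↦ t n x) atTop (𝓝 (h x)) := by
  set g : α → ENNReal := fun x ↦ ENNReal.ofReal (h x)
  refine ⟨fun n ↦ (SimpleFunc.eapprox g n).map ENNReal.toReal,
    fun n x ↦ ENNReal.toReal_nonneg,
    fun x m n hmn ↦ ENNReal.toReal_mono (SimpleFunc.eapprox_lt_top g n x).ne
      (SimpleFunc.monotone_eapprox g hmn x), fun x ↦ ?_⟩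
  have hg : Tendsto (fun n ↦ SimpleFunc.eapprox g n x) atTop (𝓝 (g x)) := by
    have hgm : Measurable g := hm.ennreal_ofReal
    rw [← SimpleFunc.iSup_eapprox_apply hgm x]
    exact tendsto_atTop_iSup fun m n hmn ↦ SimpleFunc.monotone_eapprox g hmn x
  simpa [g, ENNReal.toReal_ofReal (h0 x), Function.comp_def] using
    (ENNReal.tendsto_toReal ENNReal.ofReal_ne_top).comp hg

theorem MeasureTheory.integrable_of_monotone_of_integral_le {α : Type*} [MeasurableSpace α]
    {μ : Measure α} {F : ℕ → α → ℝ} {f : α → ℝ} {C : ℝ}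
    (hF : ∀ n, Integrable (F n) μ) (hF0 : ∀ n, 0 ≤ᵐ[μ] F n)
    (hmono : ∀ᵐ x ∂μ, Monotone fun n ↦ F n x)
    (hlim : ∀ᵐ x ∂μ, Tendsto (fun n ↦ F n x) atTop (𝓝 (f x)))
    (hC : ∀ n, ∫ x, F n x ∂μ ≤ C) : Integrable f μ := by
  have hf0 : 0 ≤ᵐ[μ] f := by
    filter_upwards [hF0 0, hmono, hlim] with x h0 hx hx'
    exact le_trans h0 (hx.ge_of_tendsto hx' 0)
  refine ⟨aestronglyMeasurable_of_tendsto_ae atTop (fun n ↦ (hF n).1) hlim,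
    (hasFiniteIntegral_iff_ofReal hf0).2 ?_⟩
  have hlint : Tendsto (fun n ↦ ∫⁻ x, ENNReal.ofReal (F n x) ∂μ) atTop
      (𝓝 (∫⁻ x, ENNReal.ofReal (f x) ∂μ)) := by
    refine lintegral_tendsto_of_tendsto_of_monotone
      (fun n ↦ (hF n).aemeasurable.ennreal_ofReal) ?_ ?_
    · filter_upwards [hmono] with x hx m n hmn using ENNReal.ofReal_le_ofReal (hx hmn)
    · filter_upwards [hlim] with x hx using (ENNReal.continuous_ofReal.tendsto _).comp hx
  refine lt_of_le_of_lt (le_of_tendsto' hlint fun n ↦ ?_) (ENNReal.ofReal_lt_top (r := C))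
  rw [← ofReal_integral_eq_lintegral_ofReal (hF n) (hF0 n)]
  exact ENNReal.ofReal_le_ofReal (hC n)

/-- The expected value of `g` at the re-randomization of `x` along `P`. -/
noncomputable def Setoid.classAverage {J : Type*} (P : Setoid J) (g : J → ℝ) (x : J) : ℝ :=
  if h : (P.cls x).Finite then (∑ y ∈ h.toFinset, g y) / Nat.card (P.cls x) else g x

namespace Setoid

variable {J : Type*} (P : Setoid J)

theorem mem_cls_self (x : J) : x ∈ P.cls x := P.refl x

theorem natCard_cls_pos {x : J} (h : (P.cls x).Finite) : 0 < (Nat.card (P.cls x) : ℝ) := by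
  have : Finite (P.cls x) := h.to_subtype
  have : Nonempty (P.cls x) := ⟨⟨x, P.mem_cls_self x⟩⟩
  exact_mod_cast Nat.card_pos

theorem classAverage_add (g g' : J → ℝ) (x : J) :
    P.classAverage (g + g') x = P.classAverage g x + P.classAverage g' x := by
  unfold classAverage
  split_ifs
  · exact (congrArg (· / _) Finset.sum_add_distrib).trans (add_div _ _ _)
  · rfl

theorem classAverage_sub (g g' : J → ℝ) (x : J) :
    P.classAverage (g - g') x = P.classAverage g x - P.classAverage g' x := by
  unfold classAverage
  split_ifs
  · exact (congrArg (· / _) (Finset.sum_sub_distrib g g')).trans (sub_div _ _ _)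
  · rfl

theorem classAverage_const_mul (c : ℝ) (g : J → ℝ) (x : J) :
    P.classAverage (fun y ↦ c * g y) x = c * P.classAverage g x := by
  unfold classAverage
  split_ifs
  · rw [← Finset.mul_sum, mul_div_assoc]
  · rfl

theorem classAverage_const (c : ℝ) (x : J) : P.classAverage (fun _ ↦ c) x = c := by
  unfold classAverage
  split_ifs with h
  · rw [Finset.sum_const, nsmul_eq_mul, ← Nat.card_eq_card_finite_toFinset h,
      mul_div_cancel_left₀ _ (P.natCard_cls_pos h).ne']
  · rfl

theorem classAverage_mono {g g' : J → ℝ} (hle : g ≤ g') (x : J) :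
    P.classAverage g x ≤ P.classAverage g' x := by
  unfold classAverage
  split_ifs with h
  · exact div_le_div_of_nonneg_right (Finset.sum_le_sum fun y _ ↦ hle y)
      (P.natCard_cls_pos h).le
  · exact hle x

theorem classAverage_nonneg {g : J → ℝ} (hg : 0 ≤ g) (x : J) : 0 ≤ P.classAverage g x := by
  simpa only [Pi.zero_def, classAverage_const] using P.classAverage_mono hg x

theorem tendsto_classAverage {ι : Type*} {l : Filter ι} {g : ι → J → ℝ} {g' : J → ℝ}
    (hg : ∀ x, Tendsto (fun i ↦ g i x) l (𝓝 (g' x))) (x : J) :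
    Tendsto (fun i ↦ P.classAverage (g i) x) l (𝓝 (P.classAverage g' x)) := by
  unfold classAverage
  split_ifs
  · exact (tendsto_finsetSum _ fun y _ ↦ hg y).div_const _
  · exact hg x

theorem classAverage_congr_of_classAverage_indicator_eq_zero {N : Set J} {g g' : J → ℝ} {x : J}
    (hx : P.classAverage (N.indicator 1) x = 0) (hgg' : ∀ y ∉ N, g y = g' y) :
    P.classAverage g x = P.classAverage g' x := by
  unfold classAverage at hx ⊢
  split_ifs at hx ⊢ with h
  · have hsum := (div_eq_zero_iff.1 hx).resolve_right (P.natCard_cls_pos h).ne'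
    rw [Finset.sum_eq_zero_iff_of_nonneg fun y _ ↦ Set.indicator_nonneg (by simp) y] at hsum
    refine congrArg (· / _) (Finset.sum_congr rfl fun y hy ↦ hgg' y fun hyN ↦ ?_)
    simpa [hyN] using hsum y hy
  · exact hgg' x fun hxN ↦ by simp [hxN] at hx

theorem classAverage_indicator_one_eq (A : Set J) (x : J) :
    P.classAverage (A.indicator 1) x =
      if (P.cls x).Finite then (Nat.card ↥(P.cls x ∩ A) : ℝ) / Nat.card (P.cls x)
      else A.indicator 1 x := by
  unfold classAverage
  split_ifs with h
  · rw [Finset.sum_indicator_eq_sum_filter]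
    simp only [Pi.one_apply, Finset.sum_const,
      nsmul_eq_mul, mul_one, Nat.card_eq_card_finite_toFinset (h.inter_of_left A)]
    congr 3
    ext y
    simp
  · rfl

theorem rerandProb_eq_integral_classAverage [MeasurableSpace J] (π : Measure J) (A : Set J) :
    rerandProb P π A = ∫ x, P.classAverage (A.indicator 1) x ∂π := by
  simp only [rerandProb, classAverage_indicator_one_eq]

end Setoid

namespace HasRerand

variable {J : Type*} [MeasurableSpace J] {P : Setoid J} {π : Measure J}

theorem integral_classAverage_indicator (hre : HasRerand P π) {A : Set J}
    (hA : MeasurableSet A) : ∫ x, P.classAverage (A.indicator 1) x ∂π = π.real A := by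
  rw [← P.rerandProb_eq_integral_classAverage]
  exact hre A hA

variable [IsProbabilityMeasure π]

/-- `HasRerand` only pins down a Bochner integral, which is junk (`0`) for non-integrable
integrands; a nonzero value forces integrability, and when `π A = 0` we pass to `Aᶜ`. -/
theorem integrable_classAverage_indicator (hre : HasRerand P π) {A : Set J}
    (hA : MeasurableSet A) :
    Integrable (P.classAverage (A.indicator 1)) π := by
  by_cases hA0 : π A = 0
  · have hcompl :
        P.classAverage (A.indicator 1) = fun x ↦ 1 - P.classAverage (Aᶜ.indicator 1) x := by
      funext x
      rw [← P.classAverage_const 1 x, ← P.classAverage_sub, Set.indicator_compl]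
      congr 1
      ext y
      simp
    refine hcompl ▸ (integrable_const 1).sub (Integrable.of_integral_ne_zero ?_)
    rw [hre.integral_classAverage_indicator hA.compl, measureReal_compl hA]
    simp [Measure.real, hA0]
  · refine Integrable.of_integral_ne_zero ?_
    rw [hre.integral_classAverage_indicator hA, measureReal_def]
    exact ENNReal.toReal_ne_zero.2 ⟨hA0, measure_ne_top π A⟩

theorem integrable_and_integral_classAverage_simpleFunc (hre : HasRerand P π) (s : SimpleFunc J ℝ) :
    Integrable (P.classAverage s) π ∧ ∫ x, P.classAverage s x ∂π = ∫ x, s x ∂π := by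
  induction s using SimpleFunc.induction with
  | @const c A hA =>
    have hs : ⇑(SimpleFunc.piecewise A hA (SimpleFunc.const J c) (SimpleFunc.const J 0)) =
        fun x ↦ c * A.indicator 1 x := by
      ext x
      by_cases hx : x ∈ A <;> simp [hx]
    have hT : P.classAverage (fun x ↦ c * A.indicator 1 x) =
        fun x ↦ c * P.classAverage (A.indicator 1) x :=
      funext (P.classAverage_const_mul c _)
    rw [hs, hT, integral_const_mul, integral_const_mul, hre.integral_classAverage_indicator hA,
      integral_indicator_one hA]
    exact ⟨(hre.integrable_classAverage_indicator hA).const_mul c, rfl⟩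
  | @add s₁ s₂ _ ih₁ ih₂ =>
    rw [SimpleFunc.coe_add, funext (P.classAverage_add s₁ s₂)]
    refine ⟨ih₁.1.add ih₂.1, ?_⟩
    rw [integral_add ih₁.1 ih₂.1, integral_add' (s₁.integrable_of_isFiniteMeasure)
      (s₂.integrable_of_isFiniteMeasure), ih₁.2, ih₂.2]

theorem integrable_and_integral_classAverage_of_nonneg (hre : HasRerand P π) {h : J → ℝ}
    (hm : Measurable h) (h0 : 0 ≤ h) (hi : Integrable h π) :
    Integrable (P.classAverage h) π ∧ ∫ x, P.classAverage h x ∂π = ∫ x, h x ∂π := by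
  obtain ⟨t, ht0, htmono, htlim⟩ := exists_simpleFunc_monotone_tendsto_of_nonneg hm h0
  have hTt := fun n ↦ hre.integrable_and_integral_classAverage_simpleFunc (t n)
  have hTmono : ∀ x, Monotone fun n ↦ P.classAverage (t n) x :=
    fun x m n hmn ↦ P.classAverage_mono (fun y ↦ htmono y hmn) x
  have hTlim := P.tendsto_classAverage htlim
  have hint : Integrable (P.classAverage h) π := by
    refine integrable_of_monotone_of_integral_le (C := ∫ x, h x ∂π) (fun n ↦ (hTt n).1)
      (fun n ↦ ae_of_all _ (P.classAverage_nonneg (ht0 n))) (ae_of_all _ hTmono)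
      (ae_of_all _ hTlim) fun n ↦ ?_
    rw [(hTt n).2]
    exact integral_mono (t n).integrable_of_isFiniteMeasure hi
      fun x ↦ (htmono x).ge_of_tendsto (htlim x) n
  refine ⟨hint, tendsto_nhds_unique (integral_tendsto_of_tendsto_of_monotone (fun n ↦ (hTt n).1)
    hint (ae_of_all _ hTmono) (ae_of_all _ hTlim)) ?_⟩
  simp_rw [fun n ↦ (hTt n).2]
  exact integral_tendsto_of_tendsto_of_monotone (fun n ↦ (t n).integrable_of_isFiniteMeasure) hi
    (ae_of_all _ htmono) (ae_of_all _ htlim)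

theorem integral_classAverage_of_measurable (hre : HasRerand P π) {f : J → ℝ}
    (hm : Measurable f) (hi : Integrable f π) :
    ∫ x, P.classAverage f x ∂π = ∫ x, f x ∂π := by
  set p : J → ℝ := fun x ↦ max (f x) 0
  set q : J → ℝ := fun x ↦ max (-f x) 0
  have hfpq : f = p - q := by
    ext x
    exact (max_zero_sub_max_neg_zero_eq_self (f x)).symm
  have hpm : Measurable p := hm.max measurable_const
  have hqm : Measurable q := hm.neg.max measurable_const
  have hp := hre.integrable_and_integral_classAverage_of_nonneg hpm
    (fun x ↦ le_max_right (f x) 0) hi.pos_part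
  have hq := hre.integrable_and_integral_classAverage_of_nonneg hqm
    (fun x ↦ le_max_right (-f x) 0) hi.neg.pos_part
  calc ∫ x, P.classAverage f x ∂π
      = ∫ x, (P.classAverage p x - P.classAverage q x) ∂π := by
        conv_lhs => rw [hfpq]
        simp only [P.classAverage_sub]
    _ = ∫ x, p x ∂π - ∫ x, q x ∂π := by rw [integral_sub hp.1 hq.1, hp.2, hq.2]
    _ = ∫ x, f x ∂π := by
        conv_rhs => rw [hfpq]
        exact (integral_sub hi.pos_part hi.neg.pos_part).symm

theorem classAverage_ae_congr (hre : HasRerand P π) {f g : J → ℝ} (hfg : f =ᵐ[π] g) :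
    P.classAverage f =ᵐ[π] P.classAverage g := by
  obtain ⟨N, hfgN, hN, hN0⟩ := exists_measurable_superset_of_null (ae_iff.1 hfg)
  have hTN : P.classAverage (N.indicator 1) =ᵐ[π] 0 := by
    refine (integral_eq_zero_iff_of_nonneg
      (P.classAverage_nonneg (g := N.indicator 1) (Set.indicator_nonneg fun _ _ ↦ zero_le_one))
      (hre.integrable_classAverage_indicator hN)).1 ?_
    rw [hre.integral_classAverage_indicator hN, measureReal_def, hN0, ENNReal.toReal_zero]
  filter_upwards [hTN] with x hx
  exact P.classAverage_congr_of_classAverage_indicator_eq_zero hx fun y hy ↦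
    not_not.1 fun hne ↦ hy (hfgN hne)

theorem integral_classAverage (hre : HasRerand P π) {f : J → ℝ} (hf : Integrable f π) :
    ∫ x, P.classAverage f x ∂π = ∫ x, f x ∂π := by
  rw [integral_congr_ae (hre.classAverage_ae_congr hf.1.ae_eq_mk),
    hre.integral_classAverage_of_measurable hf.1.measurable_mk (hf.congr hf.1.ae_eq_mk),
    integral_congr_ae hf.1.ae_eq_mk]

end HasRerand

theorem integral_eq_zero_of_class_sums_zero_general {J : Type*} [MeasurableSpace J]
    (π : MeasureTheory.Measure J) [IsProbabilityMeasure π]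
    (P : Setoid J) (hre : HasRerand P π)
    (f : J → ℝ) (hf : Integrable f π)
    (h0 : ∀ x : J, (P.cls x).Infinite → f x = 0)
    (hsum : ∀ x : J, ∀ h : (P.cls x).Finite, ∑ y ∈ h.toFinset, f y = 0) :
    ∫ x, f x ∂π = 0 := by
  have hT : P.classAverage f = 0 := by
    ext x
    unfold Setoid.classAverage
    split_ifs with h
    · rw [hsum x h, zero_div, Pi.zero_apply]
    · exact h0 x h
  rw [← hre.integral_classAverage hf, hT, Pi.zero_def, integral_zero]

/-- If `P` is a `B`-partition with the re-randomizing property and `f` is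
an integrable function vanishing on infinite classes and summing to zero on every finite
class, then `∫ f dπ = 0`. -/
theorem integral_eq_zero_of_class_sums_zero {J : Type*} [MeasurableSpace J]
    [StandardBorelSpace J] (π : MeasureTheory.Measure J) [IsProbabilityMeasure π]
    (P : Setoid J) (hP : IsBPartition P) (hre : HasRerand P π)
    (f : J → ℝ) (hf : Integrable f π)
    (h0 : ∀ x : J, (P.cls x).Infinite → f x = 0)
    (hsum : ∀ x : J, ∀ h : (P.cls x).Finite, ∑ y ∈ h.toFinset, f y = 0) :
    ∫ x, f x ∂π = 0 :=
  integral_eq_zero_of_class_sums_zero_general π P hre f hf h0 hsum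
end

section
/- There exists a B-partition of the unit interval with Lebesgue measure that does not have the re-randomizing property. Concretely, the partition of [0,1) into the pairs {x, 2x+1/3} for 0 ≤ x < 1/3 is a B-partition, but re-randomizing a uniform random point along it yields a point landing in [0,1/3) with probability 1/2 rather than 1/3. -/
open MeasureTheory

open scoped Classical

/-- The pairing map of Example: `x ↦ 2x + 1/3` on `[0,1/3)`, its inverse on `[1/3,1)`,
identity elsewhere. Its orbits are the pairs `{x, 2x+1/3}`, `0 ≤ x < 1/3`. -/
noncomputable def pairMap (x : ℝ) : ℝ :=
  if x ∈ Set.Ico (0 : ℝ) (1/3) then 2*x + 1/3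
  else if x ∈ Set.Ico (1/3 : ℝ) 1 then (x - 1/3)/2
  else x

/-! `pairMap` is a measurable involution, so the saturation of a Borel set `A` is
`A ∪ pairMap ⁻¹' A`, again Borel. On `[0,1)` it swaps `[0,1/3)` and `[1/3,1)`, so every point
of `[0,1)` lies in a two-point class with exactly one point in `[0,1/3)`: wherever the uniform
point starts in `[0,1)`, it is re-randomized into `[0,1/3)` with probability `1/2`, whereas
`[0,1/3)` has measure `1/3`. -/

open Set Function

namespace Setoid

variable {α : Type*} {f : α → α}

def ofInvolutive (hf : Involutive f) : Setoid α where
  r x y := y = x ∨ y = f x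
  iseqv :=
    ⟨fun _ => Or.inl rfl,
      by rintro x y (rfl | rfl) <;> simp [hf _],
      by rintro x y z (rfl | rfl) (rfl | rfl) <;> simp [hf _]⟩

variable (hf : Involutive f)

theorem cls_ofInvolutive (x : α) : (ofInvolutive hf).cls x = {x, f x} := rfl

theorem sat_ofInvolutive (A : Set α) : (ofInvolutive hf).sat A = A ∪ f ⁻¹' A := by
  ext x
  change (∃ y ∈ A, y = x ∨ y = f x) ↔ _
  simp [and_or_left, exists_or]

theorem isBPartition_ofInvolutive [MeasurableSpace α] (hfm : Measurable f) :
    IsBPartition (ofInvolutive hf) := fun A hA => by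
  rw [sat_ofInvolutive]
  exact hA.union (hfm hA)

theorem rerandProb_ofInvolutive [MeasurableSpace α] (π : Measure α) (A : Set α) :
    rerandProb (ofInvolutive hf) π A
      = ∫ x, (({x, f x} ∩ A).ncard : ℝ) / ({x, f x} : Set α).ncard ∂π := by
  unfold rerandProb
  congr 1 with x
  rw [cls_ofInvolutive, if_pos (toFinite _), Nat.card_coe_set_eq, Nat.card_coe_set_eq]

end Setoid

theorem Set.ncard_pair_inter_div_ncard_pair {α : Type*} {x y : α} {A : Set α}
    (h : x ∈ A ↔ y ∉ A) : (({x, y} ∩ A).ncard : ℝ) / ({x, y} : Set α).ncard = 1 / 2 := by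
  have hxy : x ≠ y := by rintro rfl; tauto
  rw [ncard_pair hxy]
  by_cases hx : x ∈ A
  · rw [insert_inter_of_mem hx, singleton_inter_eq_empty.2 (h.1 hx)]
    norm_num
  · rw [insert_inter_of_notMem hx, singleton_inter_of_mem (not_not.1 (mt h.2 hx))]
    norm_num

theorem volume_restrict_Icc_Ico_toReal {a b c d : ℝ} (hab : a ≤ b) (h : Ico a b ⊆ Icc c d) :
    (volume.restrict (Icc c d) (Ico a b)).toReal = b - a := by
  rw [Measure.restrict_apply measurableSet_Ico, inter_eq_left.2 h, Real.volume_Ico,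
    ENNReal.toReal_ofReal (sub_nonneg.2 hab)]

theorem pairMap_of_mem_lower {x : ℝ} (h : x ∈ Ico 0 (1 / 3)) : pairMap x = 2 * x + 1 / 3 :=
  if_pos h

theorem pairMap_of_mem_upper {x : ℝ} (h : x ∈ Ico (1 / 3) 1) : pairMap x = (x - 1 / 3) / 2 := by
  have : x ∉ Ico (0 : ℝ) (1 / 3) := fun h' => h.1.not_gt h'.2
  rw [pairMap, if_neg this, if_pos h]

theorem pairMap_of_notMem {x : ℝ} (h : x ∉ Ico 0 1) : pairMap x = x := by
  have h₁ : x ∉ Ico (0 : ℝ) (1 / 3) := fun h' => h ⟨h'.1, by linarith [h'.2]⟩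
  have h₂ : x ∉ Ico (1 / 3 : ℝ) 1 := fun h' => h ⟨by linarith [h'.1], h'.2⟩
  rw [pairMap, if_neg h₁, if_neg h₂]

theorem pairMap_mem_upper {x : ℝ} (h : x ∈ Ico 0 (1 / 3)) : pairMap x ∈ Ico (1 / 3) 1 := by
  rw [pairMap_of_mem_lower h]
  constructor <;> linarith [h.1, h.2]

theorem pairMap_mem_lower {x : ℝ} (h : x ∈ Ico (1 / 3) 1) : pairMap x ∈ Ico 0 (1 / 3) := by
  rw [pairMap_of_mem_upper h]
  constructor <;> linarith [h.1, h.2]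

theorem Ico_zero_one_eq_lower_union_upper :
    Ico (0 : ℝ) 1 = Ico 0 (1 / 3) ∪ Ico (1 / 3) 1 :=
  (Ico_union_Ico_eq_Ico (by norm_num) (by norm_num)).symm

theorem pairMap_involutive : Involutive pairMap := by
  intro x
  by_cases hx : x ∈ Ico (0 : ℝ) 1
  · rcases Ico_zero_one_eq_lower_union_upper ▸ hx with h | h
    · rw [pairMap_of_mem_upper (pairMap_mem_upper h), pairMap_of_mem_lower h]
      ring
    · rw [pairMap_of_mem_lower (pairMap_mem_lower h), pairMap_of_mem_upper h]
      ring
  · rw [pairMap_of_notMem hx, pairMap_of_notMem hx]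

theorem measurable_pairMap : Measurable pairMap :=
  Measurable.ite measurableSet_Ico (by fun_prop) <|
    Measurable.ite measurableSet_Ico (by fun_prop) measurable_id

theorem mem_lower_iff_pairMap_notMem {x : ℝ} (hx : x ∈ Ico 0 1) :
    x ∈ Ico 0 (1 / 3) ↔ pairMap x ∉ Ico 0 (1 / 3) := by
  rcases Ico_zero_one_eq_lower_union_upper ▸ hx with h | h
  · exact iff_of_true h fun h' => (pairMap_mem_upper h).1.not_gt h'.2
  · exact iff_of_false (fun h' => h.1.not_gt h'.2) (not_not.2 (pairMap_mem_lower h))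

theorem ncard_pair_pairMap_inter_div (x : ℝ) :
    (({x, pairMap x} ∩ Ico 0 (1 / 3)).ncard : ℝ) / ({x, pairMap x} : Set ℝ).ncard
      = (Ico 0 1).indicator (fun _ => 1 / 2) x := by
  by_cases hx : x ∈ Ico (0 : ℝ) 1
  · rw [indicator_of_mem hx, ncard_pair_inter_div_ncard_pair (mem_lower_iff_pairMap_notMem hx)]
  · have hx' : x ∉ Ico (0 : ℝ) (1 / 3) := fun h => hx ⟨h.1, by linarith [h.2]⟩
    rw [indicator_of_notMem hx, pairMap_of_notMem hx, pair_eq_singleton,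
      singleton_inter_eq_empty.2 hx', ncard_empty, Nat.cast_zero, zero_div]

theorem rerandProb_pairMap :
    rerandProb (Setoid.ofInvolutive pairMap_involutive) (volume.restrict (Icc 0 1))
      (Ico 0 (1 / 3)) = 1 / 2 := by
  rw [Setoid.rerandProb_ofInvolutive, funext ncard_pair_pairMap_inter_div,
    integral_indicator_const _ measurableSet_Ico, measureReal_def,
    volume_restrict_Icc_Ico_toReal zero_le_one Ico_subset_Icc_self]
  norm_num

/-- There is a `B`-partition of the unit interval (with Lebesgue measure)
without the re-randomizing property: the partition of `[0,1)` into the pairs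
`{x, 2x + 1/3}` for `0 ≤ x < 1/3` (and singletons elsewhere) is a `B`-partition, but
re-randomizing a uniform random point along it yields a point landing in `[0,1/3)` with
probability `1/2` rather than `1/3`. -/
theorem exists_bPartition_not_rerand :
    ∃ s : Setoid ℝ,
      (∀ x y : ℝ, s.r x y ↔ (y = x ∨ y = pairMap x)) ∧
      IsBPartition s ∧
      rerandProb s (MeasureTheory.volume.restrict (Set.Icc (0:ℝ) 1))
          (Set.Ico (0:ℝ) (1/3)) = 1/2 ∧
      ((MeasureTheory.volume.restrict (Set.Icc (0:ℝ) 1))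
          (Set.Ico (0:ℝ) (1/3))).toReal = 1/3 ∧
      ¬ HasRerand s (MeasureTheory.volume.restrict (Set.Icc (0:ℝ) 1)) := by
  have hvol : (volume.restrict (Icc (0 : ℝ) 1) (Ico 0 (1 / 3))).toReal = 1 / 3 := by
    rw [volume_restrict_Icc_Ico_toReal (by norm_num) (Ico_subset_Icc_self.trans
      (Icc_subset_Icc_right (by norm_num)))]
    norm_num
  refine ⟨Setoid.ofInvolutive pairMap_involutive, fun _ _ => Iff.rfl,
    Setoid.isBPartition_ofInvolutive pairMap_involutive measurable_pairMap, rerandProb_pairMap,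
    hvol, fun h => ?_⟩
  have := h (Ico 0 (1 / 3)) measurableSet_Ico
  rw [rerandProb_pairMap, hvol] at this
  norm_num at this
end

section
/- Let G be a graphing and P the partition of its vertex set into connected components. Then P is a B-partition (saturations of Borel sets are Borel) and P has the re-randomizing property with respect to the underlying measure λ. -/
open MeasureTheory

/-- A graphing: a bounded-degree Borel graph `(J, E)` on a standard Borel space together
with a probability measure `μ` satisfying the measure-preservation (intrinsic
mass-transport) equation `∫_A deg_B = ∫_B deg_A`. -/
structure Graphing (J : Type*) [MeasurableSpace J] where
  /-- the (symmetric) adjacency relation -/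
  E : J → J → Prop
  symm : ∀ x y, E x y → E y x
  measE : MeasurableSet {p : J × J | E p.1 p.2}
  /-- the underlying probability measure -/
  μ : Measure J
  prob : IsProbabilityMeasure μ
  /-- the degree bound -/
  D : ℕ
  degFin : ∀ x, {y | E x y}.Finite
  degBound : ∀ x, ({y | E x y}).ncard ≤ D
  mp : ∀ A B : Set J, MeasurableSet A → MeasurableSet B →
    ∫ x in A, (({y ∈ B | E x y}).ncard : ℝ) ∂μ = ∫ x in B, (({y ∈ A | E x y}).ncard : ℝ) ∂μ

namespace Graphing

variable {J : Type*} [MeasurableSpace J]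

/-- The edge set of a graphing, as a (symmetric) set of ordered pairs. -/
def edgeSet (G : Graphing J) : Set (J × J) := {p | G.E p.1 p.2}

/-- A Borel symmetric subset of the edge set of `G`. -/
def IsEdgeSubset (G : Graphing J) (X : Set (J × J)) : Prop :=
  MeasurableSet X ∧ (∀ x y, (x, y) ∈ X → (y, x) ∈ X) ∧ X ⊆ G.edgeSet

/-- The vertex set of the connected component of `x` in the graph with edge set `X`. -/
def compo (X : Set (J × J)) (x : J) : Set J :=
  {y | Relation.ReflTransGen (fun a b => (a, b) ∈ X) x y}

/-- The number of edges of `X` incident with `x`. -/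
noncomputable def degX (X : Set (J × J)) (x : J) : ℕ := ({y | (x, y) ∈ X}).ncard

/-- The average degree `d̄` of a graphing. -/
noncomputable def avgDeg (G : Graphing J) : ℝ := ∫ x, (({y | G.E x y}).ncard : ℝ) ∂G.μ

/-- The edge measure `η` of a graphing: `η(X) = (1/d̄) ∫ deg_X dμ`. -/
noncomputable def eta (G : Graphing J) (X : Set (J × J)) : ℝ :=
  (∫ x, (degX X x : ℝ) ∂G.μ) / G.avgDeg

/-- The normalized rank `ρ(X) = 1 − E_u(1/|V(G^X_u)|)` of a Borel edge set `X`, with the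
convention `1/|V| = 0` for infinite components (`Nat.card` of an infinite set is `0`). -/
noncomputable def rho (G : Graphing J) (X : Set (J × J)) : ℝ :=
  1 - ∫ x, (1 : ℝ) / (Nat.card ↥(compo X x)) ∂G.μ

/-- A graphing is hyperfinite if edge sets of arbitrarily small edge measure can be
removed so that only finite connected components remain. -/
def Hyperfinite (G : Graphing J) : Prop :=
  ∀ ε : ℝ, 0 < ε → ∃ X : Set (J × J), G.IsEdgeSubset X ∧ G.eta X < ε ∧
    ∀ x : J, (compo (G.edgeSet \ X) x).Finite

/-- A set of edges is a forest if for every edge `(a,b)` there is no path from `a` to `b`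
avoiding that edge; equivalently, the graph it spans has no cycles. -/
def IsForestSet (X : Set (J × J)) : Prop :=
  ∀ a b : J, (a, b) ∈ X →
    ¬ Relation.ReflTransGen
        (fun u v => (u, v) ∈ X ∧ ¬((u = a ∧ v = b) ∨ (u = b ∧ v = a))) a b

/-- A graphing is a forest (all components are trees) if its edge set is a forest. -/
def IsForest (G : Graphing J) : Prop := IsForestSet G.edgeSet

end Graphing


open scoped Classical

/-!
Each section `{y | E x y}` has at most `D` points. Sorting them and selecting measurably
(Lusin–Souslin), one level of the section size at a time, covers the edge set by countably
many graphs of Borel partial maps `nbr n : dom n → J`, which can be made disjoint. The map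
`nbr n`, restricted to where some `nbr m` takes it back, is a Borel partial bijection, and it
preserves `μ`: by `∫_A deg_B = ∫_B deg_A` the edge measure `∑ n, (x ↦ (x, nbr n x))_* μ|dom n`
is invariant under `Prod.swap`. Composing such pieces along words gives countably many
measure-preserving partial bijections which, made disjoint again, list every pair of the
connectivity relation exactly once. Saturations are countable unions of their preimages, and
summing over them gives the mass transport principle
`∫ ∑_{y ~ x} F x y dμ(x) = ∫ ∑_{x ~ y} F x y dμ(y)`, which for `F x y = 1_A y / |[x]|` is the
re-randomizing property.
-/

open MeasureTheory Set Function
open scoped ENNReal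

section LusinNovikov

variable {X : Type*}

def sortedTuples (Q : Set (X × ℝ)) (k : ℕ) : Set (X × (Fin k → ℝ)) :=
  {p | StrictMono p.2 ∧ ∀ i, (p.1, p.2 i) ∈ Q}

theorem range_eq_of_mem_sortedTuples {Q : Set (X × ℝ)} {k : ℕ} {p : X × (Fin k → ℝ)}
    (hfin : (Prod.mk p.1 ⁻¹' Q).Finite) (hk : (Prod.mk p.1 ⁻¹' Q).ncard ≤ k)
    (hp : p ∈ sortedTuples Q k) : range p.2 = Prod.mk p.1 ⁻¹' Q :=
  eq_of_subset_of_ncard_le (range_subset_iff.2 hp.2)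
    (by simpa [ncard_range_of_injective hp.1.injective] using hk) hfin

theorem injOn_fst_sortedTuples {Q : Set (X × ℝ)} {k : ℕ} (hfin : ∀ x, (Prod.mk x ⁻¹' Q).Finite)
    (hk : ∀ x, (Prod.mk x ⁻¹' Q).ncard ≤ k) : InjOn Prod.fst (sortedTuples Q k) :=
  fun p hp q hq hpq => Prod.ext hpq <| (hp.1.range_inj hq.1).1 <| by
    rw [range_eq_of_mem_sortedTuples (hfin _) (hk _) hp,
      range_eq_of_mem_sortedTuples (hfin _) (hk _) hq, hpq]

theorem image_fst_sortedTuples {Q : Set (X × ℝ)} {k : ℕ} (hfin : ∀ x, (Prod.mk x ⁻¹' Q).Finite)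
    (hk : ∀ x, (Prod.mk x ⁻¹' Q).ncard ≤ k) :
    Prod.fst '' sortedTuples Q k = {x | (Prod.mk x ⁻¹' Q).ncard = k} := by
  ext x
  constructor
  · rintro ⟨p, hp, rfl⟩
    simp [← range_eq_of_mem_sortedTuples (hfin _) (hk _) hp,
      ncard_range_of_injective hp.1.injective]
  · intro hx
    have hcard : (hfin x).toFinset.card = k := by rwa [← ncard_eq_toFinset_card _ (hfin x)]
    exact ⟨(x, (hfin x).toFinset.orderEmbOfFin hcard), ⟨OrderEmbedding.strictMono _,
      fun i => (hfin x).mem_toFinset.1 (Finset.orderEmbOfFin_mem _ hcard i)⟩, rfl⟩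

variable [MeasurableSpace X]

theorem measurableSet_sortedTuples {Q : Set (X × ℝ)} (hQ : MeasurableSet Q) (k : ℕ) :
    MeasurableSet (sortedTuples Q k) := by
  have h : sortedTuples Q k = (⋂ i, ⋂ j, ⋂ (_ : i < j), {p | p.2 i < p.2 j}) ∩
      ⋂ i, (fun p => (p.1, p.2 i)) ⁻¹' Q := by
    ext p
    simp [sortedTuples, StrictMono]
  rw [h]
  exact .inter (.iInter fun i => .iInter fun j => .iInter fun _ =>
    measurableSet_lt (by fun_prop) (by fun_prop))
    (.iInter fun i => (measurable_fst.prodMk (by fun_prop)) hQ)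

variable [StandardBorelSpace X]

theorem exists_measurable_enum_of_ncard_le {Q : Set (X × ℝ)} (hQ : MeasurableSet Q) {k : ℕ}
    (hfin : ∀ x, (Prod.mk x ⁻¹' Q).Finite) (hk : ∀ x, (Prod.mk x ⁻¹' Q).ncard ≤ k) :
    MeasurableSet {x | (Prod.mk x ⁻¹' Q).ncard = k} ∧ ∃ g : X → Fin k → ℝ, Measurable g ∧
      ∀ x, (Prod.mk x ⁻¹' Q).ncard = k → range (g x) = Prod.mk x ⁻¹' Q := by
  have := (measurableSet_sortedTuples hQ k).standardBorel
  have hemb : MeasurableEmbedding fun p : sortedTuples Q k => p.1.1 :=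
    (measurable_fst.comp measurable_subtype_coe).measurableEmbedding
      (injOn_iff_injective.1 (injOn_fst_sortedTuples hfin hk))
  obtain ⟨g, hg, hgS⟩ := hemb.exists_measurable_extend
    (measurable_snd.comp measurable_subtype_coe) fun _ => inferInstance
  have himage := image_fst_sortedTuples hfin hk
  refine ⟨himage ▸ image_eq_range _ _ ▸ hemb.measurableSet_range, g, hg, fun x hx => ?_⟩
  obtain ⟨p, hp, rfl⟩ : x ∈ Prod.fst '' sortedTuples Q k := himage ▸ hx
  rw [← range_eq_of_mem_sortedTuples (hfin _) (hk _) hp]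
  exact congrArg range (congrFun hgS ⟨p, hp⟩)

theorem exists_countable_measurable_cover_real (D : ℕ) {Q : Set (X × ℝ)} (hQ : MeasurableSet Q)
    (hfin : ∀ x, (Prod.mk x ⁻¹' Q).Finite) (hD : ∀ x, (Prod.mk x ⁻¹' Q).ncard ≤ D) :
    ∃ C : Set (Set X × (X → ℝ)), C.Countable ∧ (∀ P ∈ C, MeasurableSet P.1 ∧ Measurable P.2) ∧
      ∀ x t, (x, t) ∈ Q ↔ ∃ P ∈ C, x ∈ P.1 ∧ P.2 x = t := by
  induction D generalizing Q with
  | zero =>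
    refine ⟨∅, countable_empty, by simp, fun x t => ?_⟩
    have hx : Prod.mk x ⁻¹' Q = ∅ := (ncard_eq_zero (hfin x)).1 (Nat.le_zero.1 (hD x))
    simpa using (eq_empty_iff_forall_notMem.1 hx t)
  | succ D ih =>
    -- enumerate the sections of maximal size `D + 1` at once; elsewhere the bound drops to `D`
    obtain ⟨hE, g, hg, hgQ⟩ := exists_measurable_enum_of_ncard_le hQ hfin hD
    set E := {x | (Prod.mk x ⁻¹' Q).ncard = D + 1}
    have hsec x : Prod.mk x ⁻¹' (Q ∩ Prod.fst ⁻¹' Eᶜ) = if x ∈ E then ∅ else Prod.mk x ⁻¹' Q := by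
      split_ifs with hx <;> ext t <;> simp [hx]
    obtain ⟨C, hC, hCm, hCQ⟩ := ih (hQ.inter (measurable_fst hE.compl))
      (fun x => (hfin x).subset (preimage_mono inter_subset_left)) fun x => by
        rw [hsec]
        split_ifs with hx
        · simp
        · exact Nat.le_of_lt_succ ((hD x).lt_of_ne hx)
    refine ⟨range (fun i : Fin (D + 1) => (E, fun x => g x i)) ∪ C,
      (countable_range _).union hC, ?_, fun x t => ?_⟩
    · rintro P (⟨i, rfl⟩ | hP)
      exacts [⟨hE, (measurable_pi_apply i).comp hg⟩, hCm P hP]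
    · have hsplit : (x, t) ∈ Q ↔ (x ∈ E ∧ t ∈ range (g x)) ∨ (x, t) ∈ Q ∩ Prod.fst ⁻¹' Eᶜ := by
        by_cases hx : x ∈ E
        · simp [hx, hgQ x hx]
        · simp [hx]
      rw [hsplit, hCQ]
      simp only [mem_union, mem_range, or_and_right, exists_or, exists_exists_eq_and]
      simp [and_comm]

theorem exists_measurable_cover {Y : Type*} [MeasurableSpace Y] [StandardBorelSpace Y]
    [Nonempty Y] {Q : Set (X × Y)} (hQ : MeasurableSet Q) {D : ℕ}
    (hfin : ∀ x, (Prod.mk x ⁻¹' Q).Finite) (hD : ∀ x, (Prod.mk x ⁻¹' Q).ncard ≤ D) :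
    ∃ (V : ℕ → Set X) (f : ℕ → X → Y), (∀ n, MeasurableSet (V n)) ∧ (∀ n, Measurable (f n)) ∧
      ∀ x y, (x, y) ∈ Q ↔ ∃ n, x ∈ V n ∧ f n x = y := by
  obtain ⟨e, he⟩ := exists_measurableEmbedding_real Y
  obtain ⟨g, hg, hge⟩ := he.exists_measurable_extend measurable_id fun _ => inferInstance
  have hsec x : Prod.mk x ⁻¹' (Prod.map id e '' Q) = e '' (Prod.mk x ⁻¹' Q) := by
    ext t
    simp [eq_comm]
  obtain ⟨C, hC, hCm, hCQ⟩ := exists_countable_measurable_cover_real D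
    ((MeasurableEmbedding.id.prodMap he).measurableSet_image.2 hQ)
    (fun x => hsec x ▸ (hfin x).image e)
    (fun x => by rw [hsec, ncard_image_of_injective _ he.injective]; exact hD x)
  obtain ⟨φ, hφ⟩ := (hC.insert (∅, 0)).exists_eq_range (insert_nonempty _ _)
  have hφm n : MeasurableSet (φ n).1 ∧ Measurable (φ n).2 := by
    rcases (hφ ▸ mem_range_self n : φ n ∈ insert (∅, 0) C) with h | h
    · rw [h]
      exact ⟨.empty, measurable_const⟩
    · exact hCm _ h
  have hφQ x t : (x, t) ∈ Prod.map id e '' Q ↔ ∃ n, x ∈ (φ n).1 ∧ (φ n).2 x = t := by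
    have hrange : (∃ n, x ∈ (φ n).1 ∧ (φ n).2 x = t) ↔ ∃ P ∈ range φ, x ∈ P.1 ∧ P.2 x = t :=
      (exists_range_iff (p := fun P : Set X × (X → ℝ) => x ∈ P.1 ∧ P.2 x = t)).symm
    rw [hCQ, hrange, ← hφ]
    simp
  refine ⟨fun n => (φ n).1, fun n => g ∘ (φ n).2, fun n => (hφm n).1,
    fun n => hg.comp (hφm n).2, fun x y => ?_⟩
  have hrange n (hn : x ∈ (φ n).1) : (φ n).2 x ∈ range e := by
    obtain ⟨⟨_, y'⟩, -, h⟩ := (hφQ x _).2 ⟨n, hn, rfl⟩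
    exact ⟨y', congrArg Prod.snd h⟩
  rw [← (MeasurableEmbedding.id.prodMap he).injective.mem_set_image, Prod.map_apply, id, hφQ]
  refine exists_congr fun n => and_congr_right fun hn => ?_
  obtain ⟨y', hy'⟩ := hrange n hn
  dsimp only [comp_apply]
  rw [← hy', he.injective.eq_iff, show g (e y') = y' from congrFun hge y']

end LusinNovikov

theorem encard_inter_eq_tsum {X : Type*} (S A : Set X) :
    ((S ∩ A).encard : ℝ≥0∞) = ∑' y : S, A.indicator 1 y := by
  rw [← ENNReal.tsum_set_one, tsum_subtype (S ∩ A) fun _ => (1 : ℝ≥0∞), tsum_subtype,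
    indicator_indicator]
  rfl

structure IsGraphEnumeration {X Y : Type*} (s : ℕ → Set X) (f : ℕ → X → Y)
    (r : X → Y → Prop) : Prop where
  rel_iff : ∀ x y, r x y ↔ ∃ n, x ∈ s n ∧ f n x = y
  injOn : ∀ x n m, x ∈ s n → x ∈ s m → f n x = f m x → n = m

namespace IsGraphEnumeration

variable {X Y : Type*} {s : ℕ → Set X} {f : ℕ → X → Y} {r : X → Y → Prop}

theorem tsum_indicator (h : IsGraphEnumeration s f r) (F : X → Y → ℝ≥0∞) (x : X) :
    ∑' n, (s n).indicator (fun z => F z (f n z)) x = ∑' y : {y | r x y}, F x y := by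
  let e : {n | x ∈ s n} ≃ {y | r x y} := Equiv.ofBijective
    (fun n => ⟨f n x, (h.rel_iff x _).2 ⟨n, n.2, rfl⟩⟩)
    ⟨fun n m hnm => Subtype.ext (h.injOn x n m n.2 m.2 (congrArg Subtype.val hnm)),
      fun y => by
        obtain ⟨n, hn, hy⟩ := (h.rel_iff x y).1 y.2
        exact ⟨⟨n, hn⟩, Subtype.ext hy⟩⟩
  exact (tsum_subtype {n | x ∈ s n} fun n => F x (f n x)).symm.trans (e.tsum_eq (F x ·))

variable [MeasurableSpace X] [MeasurableSpace Y]

theorem measurable_tsum (h : IsGraphEnumeration s f r) (hs : ∀ n, MeasurableSet (s n))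
    (hf : ∀ n, Measurable (f n)) {F : X → Y → ℝ≥0∞} (hF : Measurable (uncurry F)) :
    Measurable fun x => ∑' y : {y | r x y}, F x y := by
  simp_rw [← h.tsum_indicator]
  exact .tsum fun n => (hF.comp (measurable_id.prodMk (hf n))).indicator (hs n)

theorem measurable_encard_inter (h : IsGraphEnumeration s f r) (hs : ∀ n, MeasurableSet (s n))
    (hf : ∀ n, Measurable (f n)) {B : Set Y} (hB : MeasurableSet B) :
    Measurable fun x => (({y | r x y} ∩ B).encard : ℝ≥0∞) := by
  simp_rw [encard_inter_eq_tsum]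
  exact h.measurable_tsum hs hf ((measurable_one.indicator hB).comp measurable_snd)

end IsGraphEnumeration

theorem exists_isGraphEnumeration_inter {X Y : Type*} [MeasurableSpace X] [MeasurableSpace Y]
    [MeasurableEq Y] {V : ℕ → Set X} {f : ℕ → X → Y} {r : X → Y → Prop}
    (hV : ∀ n, MeasurableSet (V n)) (hf : ∀ n, Measurable (f n))
    (hr : ∀ x y, r x y ↔ ∃ n, x ∈ V n ∧ f n x = y) :
    ∃ W : ℕ → Set X, (∀ n, MeasurableSet (W n)) ∧ IsGraphEnumeration (fun n => V n ∩ W n) f r := by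
  refine ⟨fun n => ⋂ m < n, (V m)ᶜ ∪ {x | f m x ≠ f n x}, fun n => ?_, ⟨fun x y => ?_, ?_⟩⟩
  · exact .biInter (to_countable _) fun m _ =>
      (hV m).compl.union (measurableSet_eq_fun (hf m) (hf n)).compl
  · rw [hr]
    refine ⟨fun hex => ?_, fun ⟨n, hn, hfn⟩ => ⟨n, hn.1, hfn⟩⟩
    classical
    refine ⟨Nat.find hex, ⟨(Nat.find_spec hex).1, mem_iInter₂.2 fun m hm => ?_⟩,
      (Nat.find_spec hex).2⟩
    by_contra! hxm
    simp only [mem_union, mem_compl_iff, mem_ofPred_eq, not_or, not_not] at hxm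
    exact Nat.find_min hex hm ⟨hxm.1, hxm.2.trans (Nat.find_spec hex).2⟩
  · intro x n m hn hm hnm
    by_contra hne
    rcases lt_or_gt_of_ne hne with hlt | hlt
    · exact (mem_iInter₂.1 hm.2 n hlt).elim (· hn.1) (· hnm)
    · exact (mem_iInter₂.1 hn.2 m hlt).elim (· hm.1) (· hnm.symm)

structure PartialEquiv.IsMeasurePreserving {α β : Type*} [MeasurableSpace α] [MeasurableSpace β]
    (e : PartialEquiv α β) (μ : Measure α) (ν : Measure β) : Prop where
  measurableSet_source : MeasurableSet e.source
  measurableSet_target : MeasurableSet e.target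
  measurable : Measurable e
  measurable_symm : Measurable e.symm
  map_restrict : (μ.restrict e.source).map e = ν.restrict e.target

namespace PartialEquiv.IsMeasurePreserving

variable {α β γ : Type*} [MeasurableSpace α] [MeasurableSpace β] [MeasurableSpace γ]
  {μ : Measure α} {ν : Measure β} {ρ : Measure γ} {e : PartialEquiv α β}

theorem map_restrict_inter_preimage (he : e.IsMeasurePreserving μ ν) {t : Set β}
    (ht : MeasurableSet t) :
    (μ.restrict (e.source ∩ e ⁻¹' t)).map e = ν.restrict (e.target ∩ t) := by
  rw [inter_comm, ← Measure.restrict_restrict (he.measurable ht),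
    ← Measure.restrict_map he.measurable ht, he.map_restrict, Measure.restrict_restrict ht,
    inter_comm]

theorem refl (μ : Measure α) : (PartialEquiv.refl α).IsMeasurePreserving μ μ :=
  ⟨.univ, .univ, measurable_id, measurable_id, Measure.map_id⟩

theorem trans (he : e.IsMeasurePreserving μ ν) {e' : PartialEquiv β γ}
    (he' : e'.IsMeasurePreserving ν ρ) : (e.trans e').IsMeasurePreserving μ ρ where
  measurableSet_source := he.measurableSet_source.inter (he.measurable he'.measurableSet_source)
  measurableSet_target :=
    he'.measurableSet_target.inter (he'.measurable_symm he.measurableSet_target)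
  measurable := he'.measurable.comp he.measurable
  measurable_symm := he.measurable_symm.comp he'.measurable_symm
  map_restrict := by
    rw [trans_source, coe_trans, ← Measure.map_map he'.measurable he.measurable,
      he.map_restrict_inter_preimage he'.measurableSet_source, inter_comm,
      ← e'.source_inter_preimage_inv_preimage,
      he'.map_restrict_inter_preimage (he'.measurable_symm he.measurableSet_target), trans_target]

theorem restr (he : e.IsMeasurePreserving μ ν) {s : Set α} (hs : MeasurableSet s) :
    (e.restr s).IsMeasurePreserving μ ν where
  measurableSet_source := he.measurableSet_source.inter hs
  measurableSet_target := he.measurableSet_target.inter (he.measurable_symm hs)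
  measurable := he.measurable
  measurable_symm := he.measurable_symm
  map_restrict := by
    rw [restr_source, restr_target, restr_coe, ← e.source_inter_preimage_inv_preimage,
      he.map_restrict_inter_preimage (he.measurable_symm hs)]

theorem setLIntegral_comp (he : e.IsMeasurePreserving μ ν) {F : α → β → ℝ≥0∞}
    (hF : Measurable (uncurry F)) :
    ∫⁻ x in e.source, F x (e x) ∂μ = ∫⁻ y in e.target, F (e.symm y) y ∂ν := by
  rw [← he.map_restrict, lintegral_map (f := fun y => F (e.symm y) y)
    (hF.comp (he.measurable_symm.prodMk measurable_id)) he.measurable]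
  exact setLIntegral_congr_fun he.measurableSet_source fun x hx => by rw [e.left_inv hx]

end PartialEquiv.IsMeasurePreserving

theorem IsGraphEnumeration.symm {X Y : Type*} {p : ℕ → PartialEquiv X Y} {r : X → Y → Prop}
    (h : IsGraphEnumeration (fun n => (p n).source) (fun n => p n) r) :
    IsGraphEnumeration (fun n => (p n).target) (fun n => (p n).symm) (flip r) where
  rel_iff y x := by
    rw [flip, h.rel_iff]
    refine exists_congr fun n => ⟨fun ⟨hx, hxy⟩ => ?_, fun ⟨hy, hyx⟩ => ?_⟩
    · exact ⟨hxy ▸ (p n).map_source hx, hxy ▸ (p n).left_inv hx⟩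
    · exact ⟨hyx ▸ (p n).map_target hy, hyx ▸ (p n).right_inv hy⟩
  injOn y n m hn hm hnm := h.injOn _ n m ((p n).map_target hn) (hnm ▸ (p m).map_target hm)
    (by rw [(p n).right_inv hn, hnm, (p m).right_inv hm])

theorem lintegral_tsum_rel_comm {X Y : Type*} [MeasurableSpace X] [MeasurableSpace Y]
    {μ : Measure X} {ν : Measure Y} {p : ℕ → PartialEquiv X Y} {r : X → Y → Prop}
    (hp : ∀ n, (p n).IsMeasurePreserving μ ν)
    (h : IsGraphEnumeration (fun n => (p n).source) (fun n => p n) r)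
    {F : X → Y → ℝ≥0∞} (hF : Measurable (uncurry F)) :
    ∫⁻ x, ∑' y : {y | r x y}, F x y ∂μ = ∫⁻ y, ∑' x : {x | r x y}, F x y ∂ν := by
  have hsrc n : Measurable fun x => F x (p n x) :=
    hF.comp (measurable_id.prodMk (hp n).measurable)
  have htgt n : Measurable fun y => F ((p n).symm y) y :=
    hF.comp ((hp n).measurable_symm.prodMk measurable_id)
  have hsymm y : ∑' x : {x | r x y}, F x y =
      ∑' n, ((p n).target).indicator (fun z => F ((p n).symm z) z) y :=
    (h.symm.tsum_indicator (fun y x => F x y) y).symm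
  simp_rw [← h.tsum_indicator, hsymm]
  rw [lintegral_tsum fun n => ((hsrc n).indicator (hp n).measurableSet_source).aemeasurable,
    lintegral_tsum fun n => ((htgt n).indicator (hp n).measurableSet_target).aemeasurable]
  refine tsum_congr fun n => ?_
  rw [lintegral_indicator (hp n).measurableSet_source,
    lintegral_indicator (hp n).measurableSet_target, (hp n).setLIntegral_comp hF]

theorem exists_isGraphEnumeration_restr {X Y : Type*} [MeasurableSpace X] [MeasurableSpace Y]
    [MeasurableEq Y] {μ : Measure X} {ν : Measure Y} {p : ℕ → PartialEquiv X Y}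
    {r : X → Y → Prop} (hp : ∀ n, (p n).IsMeasurePreserving μ ν)
    (hr : ∀ x y, r x y ↔ ∃ n, x ∈ (p n).source ∧ p n x = y) :
    ∃ q : ℕ → PartialEquiv X Y, (∀ n, (q n).IsMeasurePreserving μ ν) ∧
      IsGraphEnumeration (fun n => (q n).source) (fun n => q n) r := by
  obtain ⟨W, hW, hWr⟩ := exists_isGraphEnumeration_inter (fun n => (hp n).measurableSet_source)
    (fun n => (hp n).measurable) hr
  exact ⟨fun n => (p n).restr (W n), fun n => (hp n).restr (hW n), hWr⟩

theorem Set.Finite.toReal_encard {X : Type*} {S : Set X} (hS : S.Finite) :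
    (S.encard : ℝ≥0∞).toReal = Nat.card S := by
  rw [← hS.cast_ncard_eq, Nat.card_coe_set_eq]
  simp

namespace Setoid

variable {X : Type*} (s : Setoid X)

theorem isBPartition_of_rel_iff [MeasurableSpace X] {V : ℕ → Set X}
    {f : ℕ → X → X} (hV : ∀ n, MeasurableSet (V n)) (hf : ∀ n, Measurable (f n))
    (hs : ∀ x y, s.r x y ↔ ∃ n, x ∈ V n ∧ f n x = y) : IsBPartition s := by
  intro A hA
  have hsat : s.sat A = ⋃ n, V n ∩ f n ⁻¹' A := by
    ext x
    simp only [Setoid.sat, hs, mem_iUnion, mem_inter_iff, mem_preimage]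
    constructor
    · rintro ⟨_, hy, n, hn, rfl⟩
      exact ⟨n, hn, hy⟩
    · rintro ⟨n, hn, hy⟩
      exact ⟨_, hy, n, hn, rfl⟩
  rw [hsat]
  exact .iUnion fun n => (hV n).inter (hf n hA)

theorem cls_eq_of_rel {x y : X} (h : s.r x y) : s.cls x = s.cls y :=
  Set.ext fun _ => ⟨s.iseqv.trans (s.iseqv.symm h), s.iseqv.trans h⟩

theorem setOf_rel_eq_cls (y : X) : {x | s.r x y} = s.cls y :=
  Set.ext fun _ => ⟨s.iseqv.symm, s.iseqv.symm⟩

theorem encard_cls_ne_zero (x : X) : ((s.cls x).encard : ℝ≥0∞) ≠ 0 := by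
  simpa using (Set.nonempty_of_mem (s := s.cls x) (s.iseqv.refl x)).ne_empty

section Measurable

variable [MeasurableSpace X]

theorem measurable_encard_cls {V : ℕ → Set X} {f : ℕ → X → X}
    (hV : ∀ n, MeasurableSet (V n)) (hf : ∀ n, Measurable (f n))
    (h : IsGraphEnumeration V f s.r) : Measurable fun x => ((s.cls x).encard : ℝ≥0∞) := by
  have hc := h.measurable_encard_inter hV hf .univ
  simp only [inter_univ] at hc
  exact hc

theorem measurableSet_setOf_finite_cls {V : ℕ → Set X} {f : ℕ → X → X}
    (hV : ∀ n, MeasurableSet (V n)) (hf : ∀ n, Measurable (f n))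
    (h : IsGraphEnumeration V f s.r) : MeasurableSet {x | (s.cls x).Finite} := by
  convert s.measurable_encard_cls hV hf h (measurableSet_singleton ⊤).compl using 1
  ext x
  simp

theorem lintegral_encard_inter_div_encard {μ : Measure X} {p : ℕ → PartialEquiv X X}
    (hp : ∀ n, (p n).IsMeasurePreserving μ μ)
    (h : IsGraphEnumeration (fun n => (p n).source) (fun n => p n) s.r)
    {A : Set X} (hA : MeasurableSet A) :
    ∫⁻ x, ((s.cls x ∩ A).encard : ℝ≥0∞) / (s.cls x).encard ∂μ =
      μ (A ∩ {x | (s.cls x).Finite}) := by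
  have hV n := (hp n).measurableSet_source
  have hf n := (hp n).measurable
  have hc := s.measurable_encard_cls hV hf h
  have hF : Measurable (uncurry fun x y => ((s.cls x).encard : ℝ≥0∞)⁻¹ * A.indicator 1 y) :=
    (hc.inv.comp measurable_fst).mul ((measurable_one.indicator hA).comp measurable_snd)
  have hlhs x : ∑' y : {y | s.r x y}, ((s.cls x).encard : ℝ≥0∞)⁻¹ * A.indicator 1 y =
      ((s.cls x ∩ A).encard : ℝ≥0∞) / (s.cls x).encard := by
    rw [ENNReal.tsum_mul_left, div_eq_mul_inv, mul_comm, encard_inter_eq_tsum]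
    rfl
  have hrhs y : ∑' x : {x | s.r x y}, ((s.cls x).encard : ℝ≥0∞)⁻¹ * A.indicator 1 y =
      (A ∩ {x | (s.cls x).Finite}).indicator 1 y := by
    rw [ENNReal.tsum_mul_right, tsum_congr fun x : {x | s.r x y} => by
      rw [s.cls_eq_of_rel x.2], ENNReal.tsum_set_const, s.setOf_rel_eq_cls]
    by_cases hy : (s.cls y).Finite
    · rw [ENNReal.mul_inv_cancel (s.encard_cls_ne_zero y) (by simpa using hy)]
      by_cases hyA : y ∈ A <;> simp [hyA, hy]
    · rw [Set.encard_eq_top hy]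
      simp [hy]
  simp_rw [← hlhs, lintegral_tsum_rel_comm hp h hF, hrhs,
    lintegral_indicator_one (hA.inter (s.measurableSet_setOf_finite_cls hV hf h))]

theorem hasRerand_of_isGraphEnumeration {μ : Measure X} {p : ℕ → PartialEquiv X X}
    (hp : ∀ n, (p n).IsMeasurePreserving μ μ)
    (h : IsGraphEnumeration (fun n => (p n).source) (fun n => p n) s.r) : HasRerand s μ := by
  intro A hA
  set S := {x | (s.cls x).Finite}
  -- on an infinite class `(s.cls x).encard = ⊤`, so the first summand vanishes
  set ψ : X → ℝ≥0∞ := fun x =>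
    ((s.cls x ∩ A).encard : ℝ≥0∞) / (s.cls x).encard + (Sᶜ ∩ A).indicator 1 x
  have hV n := (hp n).measurableSet_source
  have hf n := (hp n).measurable
  have hS : MeasurableSet S := s.measurableSet_setOf_finite_cls hV hf h
  have hdiv : Measurable fun x => ((s.cls x ∩ A).encard : ℝ≥0∞) / (s.cls x).encard :=
    (h.measurable_encard_inter hV hf hA).div (s.measurable_encard_cls hV hf h)
  have hψ x : (if (s.cls x).Finite then (Nat.card ↥(s.cls x ∩ A) : ℝ) / Nat.card ↥(s.cls x)
      else A.indicator 1 x) = (ψ x).toReal := by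
    simp only [ψ]
    by_cases hx : (s.cls x).Finite
    · have hxS : x ∉ Sᶜ ∩ A := fun hx' => hx'.1 hx
      rw [if_pos hx, indicator_of_notMem hxS, add_zero, ENNReal.toReal_div,
        (hx.subset inter_subset_left).toReal_encard, hx.toReal_encard]
    · have hxS : x ∈ Sᶜ := hx
      rw [if_neg hx, Set.encard_eq_top hx]
      by_cases hxA : x ∈ A <;> simp [hxA, hxS]
  have hψ_ne_top x : ψ x ≠ ⊤ := by
    by_cases hx : (s.cls x).Finite
    · have hxS : x ∉ Sᶜ ∩ A := fun hx' => hx'.1 hx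
      simpa [ψ, hxS] using ENNReal.div_ne_top (by simpa using hx.subset inter_subset_left)
        (s.encard_cls_ne_zero x)
    · simp only [ψ, Set.encard_eq_top hx, ENat.toENNReal_top, ENNReal.div_top, zero_add]
      exact ne_top_of_le_ne_top ENNReal.one_ne_top (indicator_le_self' (fun _ _ => zero_le_one) x)
  have hψm : Measurable ψ := hdiv.add (measurable_one.indicator (hS.compl.inter hA))
  rw [rerandProb, integral_congr_ae (ae_of_all _ hψ), integral_toReal hψm.aemeasurable
      (ae_of_all _ fun x => (hψ_ne_top x).lt_top), lintegral_add_left hdiv,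
    s.lintegral_encard_inter_div_encard hp h hA, lintegral_indicator_one (hS.compl.inter hA),
    inter_comm Sᶜ, ← Set.sdiff_eq, measure_inter_add_sdiff _ hS]

end Measurable

end Setoid

namespace Graphing

variable {J : Type*} [MeasurableSpace J]

theorem nonempty (G : Graphing J) : Nonempty J :=
  have := G.prob
  nonempty_of_isProbabilityMeasure G.μ

structure EdgeEnumeration (G : Graphing J) where
  dom : ℕ → Set J
  nbr : ℕ → J → J
  measurableSet_dom : ∀ n, MeasurableSet (dom n)
  measurable_nbr : ∀ n, Measurable (nbr n)
  isGraphEnumeration : IsGraphEnumeration dom nbr G.E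

variable [StandardBorelSpace J]

theorem nonempty_edgeEnumeration (G : Graphing J) : Nonempty G.EdgeEnumeration := by
  have := G.nonempty
  obtain ⟨V, f, hV, hf, hVf⟩ := exists_measurable_cover G.measE G.degFin G.degBound
  obtain ⟨W, hW, hWf⟩ := exists_isGraphEnumeration_inter (r := G.E) hV hf hVf
  exact ⟨⟨_, f, fun n => (hV n).inter (hW n), hf, hWf⟩⟩

theorem measurable_encard_inter (G : Graphing J) {B : Set J} (hB : MeasurableSet B) :
    Measurable fun x => (({y | G.E x y} ∩ B).encard : ℝ≥0∞) :=
  have F := G.nonempty_edgeEnumeration.some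
  F.isGraphEnumeration.measurable_encard_inter F.measurableSet_dom F.measurable_nbr hB

theorem lintegral_encard_inter_eq_ofReal (G : Graphing J) {A B : Set J} (hB : MeasurableSet B) :
    ∫⁻ x in A, (({y | G.E x y} ∩ B).encard : ℝ≥0∞) ∂G.μ =
      ENNReal.ofReal (∫ x in A, ({y ∈ B | G.E x y}.ncard : ℝ) ∂G.μ) := by
  have := G.prob
  have hdeg x : (({y | G.E x y} ∩ B).encard : ℝ≥0∞) = {y ∈ B | G.E x y}.ncard := by
    rw [inter_comm, ← sep_mem_eq, ((G.degFin x).subset fun y hy => hy.2).cast_ncard_eq.symm]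
    rfl
  have hint : Integrable (fun x => ({y ∈ B | G.E x y}.ncard : ℝ)) (G.μ.restrict A) := by
    refine .of_bound (C := G.D) ?_ (ae_of_all _ fun x => ?_)
    · simp_rw [← ENNReal.toReal_natCast, ← hdeg]
      exact (G.measurable_encard_inter hB).ennreal_toReal.aestronglyMeasurable
    · simpa using (ncard_le_ncard (fun y hy => hy.2) (G.degFin x)).trans (G.degBound x)
  rw [ofReal_integral_eq_lintegral_ofReal hint (ae_of_all _ fun x => by positivity)]
  simp_rw [hdeg, ENNReal.ofReal_natCast]

theorem lintegral_encard_inter_comm (G : Graphing J) {A B : Set J} (hA : MeasurableSet A)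
    (hB : MeasurableSet B) :
    ∫⁻ x in A, (({y | G.E x y} ∩ B).encard : ℝ≥0∞) ∂G.μ =
      ∫⁻ x in B, (({y | G.E x y} ∩ A).encard : ℝ≥0∞) ∂G.μ := by
  rw [G.lintegral_encard_inter_eq_ofReal hB, G.lintegral_encard_inter_eq_ofReal hA, G.mp A B hA hB]

end Graphing

namespace Graphing.EdgeEnumeration

variable {J : Type*} [MeasurableSpace J] {G : Graphing J} (F : G.EdgeEnumeration)

noncomputable def edgeMeasure : Measure (J × J) :=
  Measure.sum fun n => (G.μ.restrict (F.dom n)).map fun x => (x, F.nbr n x)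

theorem measurable_graph (n : ℕ) : Measurable fun x => (x, F.nbr n x) :=
  measurable_id.prodMk (F.measurable_nbr n)

theorem edgeMeasure_apply {T : Set (J × J)} (hT : MeasurableSet T) :
    F.edgeMeasure T = ∑' n, G.μ (F.dom n ∩ (fun x => (x, F.nbr n x)) ⁻¹' T) := by
  simp_rw [edgeMeasure, Measure.sum_apply _ hT, Measure.map_apply (F.measurable_graph _) hT,
    Measure.restrict_apply (F.measurable_graph _ hT), inter_comm]

theorem edgeMeasure_prod {A B : Set J} (hA : MeasurableSet A) (hB : MeasurableSet B) :
    F.edgeMeasure (A ×ˢ B) = ∫⁻ x in A, (({y | G.E x y} ∩ B).encard : ℝ≥0∞) ∂G.μ := by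
  have hS n : MeasurableSet (F.dom n ∩ F.nbr n ⁻¹' B) :=
    (F.measurableSet_dom n).inter (F.measurable_nbr n hB)
  have hdeg x : (({y | G.E x y} ∩ B).encard : ℝ≥0∞) =
      ∑' n, (F.dom n ∩ F.nbr n ⁻¹' B).indicator 1 x := by
    rw [encard_inter_eq_tsum, ← F.isGraphEnumeration.tsum_indicator fun _ y => B.indicator 1 y]
    simp_rw [← indicator_indicator]
    rfl
  simp_rw [hdeg]
  rw [lintegral_tsum fun n => (measurable_one.indicator (hS n)).aemeasurable,
    F.edgeMeasure_apply (hA.prod hB)]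
  refine tsum_congr fun n => ?_
  rw [lintegral_indicator_one (hS n), Measure.restrict_apply (hS n)]
  congr 1
  ext x
  simp only [mem_inter_iff, mem_preimage, mem_prod]
  tauto

def pairSet (n m : ℕ) : Set J := {x | x ∈ F.dom n ∧ F.nbr n x ∈ F.dom m ∧ F.nbr m (F.nbr n x) = x}

def piece (n m : ℕ) : PartialEquiv J J where
  toFun := F.nbr n
  invFun := F.nbr m
  source := F.pairSet n m
  target := F.pairSet m n
  map_source' _ hx := ⟨hx.2.1, hx.2.2.symm ▸ hx.1, by rw [hx.2.2]⟩
  map_target' _ hy := ⟨hy.2.1, hy.2.2.symm ▸ hy.1, by rw [hy.2.2]⟩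
  left_inv' _ hx := hx.2.2
  right_inv' _ hy := hy.2.2

def path : List (ℕ × ℕ) → PartialEquiv J J
  | [] => PartialEquiv.refl J
  | nm :: w => (F.piece nm.1 nm.2).trans (path w)

theorem reflTransGen_path : ∀ w, ∀ x ∈ (F.path w).source,
    Relation.ReflTransGen G.E x (F.path w x)
  | [] => fun _ _ => .refl
  | _ :: w => fun _ hx => .head ((F.isGraphEnumeration.rel_iff _ _).2 ⟨_, hx.1.1, rfl⟩)
      (reflTransGen_path w _ hx.2)

theorem exists_path {x y : J} (h : Relation.ReflTransGen G.E x y) :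
    ∃ w, x ∈ (F.path w).source ∧ F.path w x = y := by
  induction h using Relation.ReflTransGen.head_induction_on with
  | refl => exact ⟨[], mem_univ _, rfl⟩
  | head hxz _ ih =>
    obtain ⟨w, hw, rfl⟩ := ih
    obtain ⟨n, hn, rfl⟩ := (F.isGraphEnumeration.rel_iff _ _).1 hxz
    obtain ⟨m, hm, hmx⟩ := (F.isGraphEnumeration.rel_iff _ _).1 (G.symm _ _ hxz)
    exact ⟨(n, m) :: w, ⟨⟨hn, hm, hmx⟩, hw⟩, rfl⟩

variable [StandardBorelSpace J]

instance : IsFiniteMeasure F.edgeMeasure :=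
  ⟨by
    rw [← univ_prod_univ, F.edgeMeasure_prod .univ .univ, G.lintegral_encard_inter_eq_ofReal .univ]
    exact ENNReal.ofReal_lt_top⟩

theorem map_swap_edgeMeasure : F.edgeMeasure.map Prod.swap = F.edgeMeasure := by
  refine (ext_of_generate_finite _ generateFrom_prod.symm isPiSystem_prod ?_ ?_).symm
  · rintro _ ⟨A, hA, B, hB, rfl⟩
    rw [Measure.map_apply measurable_swap (hA.prod hB), preimage_swap_prod,
      F.edgeMeasure_prod hA hB, F.edgeMeasure_prod hB hA, G.lintegral_encard_inter_comm hA hB]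
  · rw [Measure.map_apply measurable_swap .univ, preimage_univ]

theorem edgeMeasure_graph {n : ℕ} {T : Set J} (hT : MeasurableSet T) (hTn : T ⊆ F.dom n) :
    F.edgeMeasure {p | p.1 ∈ T ∧ p.2 = F.nbr n p.1} = G.μ T := by
  have hgraph : MeasurableSet {p : J × J | p.1 ∈ T ∧ p.2 = F.nbr n p.1} :=
    (measurable_fst hT).inter
      (measurableSet_eq_fun measurable_snd ((F.measurable_nbr n).comp measurable_fst))
  rw [F.edgeMeasure_apply hgraph, tsum_eq_single n fun m hm => ?_]
  · congr 1
    ext x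
    simpa using fun hx => hTn hx
  · convert measure_empty (μ := G.μ)
    ext x
    simpa using fun hxm hxT hmn => hm (F.isGraphEnumeration.injOn x m n hxm (hTn hxT) hmn)

theorem measurableSet_pairSet (n m : ℕ) : MeasurableSet (F.pairSet n m) :=
  (F.measurableSet_dom n).inter ((F.measurable_nbr n (F.measurableSet_dom m)).inter
    (measurableSet_eq_fun ((F.measurable_nbr m).comp (F.measurable_nbr n)) measurable_id))

theorem piece_isMeasurePreserving (n m : ℕ) : (F.piece n m).IsMeasurePreserving G.μ G.μ where
  measurableSet_source := F.measurableSet_pairSet n m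
  measurableSet_target := F.measurableSet_pairSet m n
  measurable := F.measurable_nbr n
  measurable_symm := F.measurable_nbr m
  map_restrict := by
    ext B hB
    set e := F.piece n m
    have he : Measurable e := F.measurable_nbr n
    have hT : MeasurableSet (e.source ∩ e ⁻¹' B) :=
      (F.measurableSet_pairSet n m).inter (F.measurable_nbr n hB)
    have hT' : MeasurableSet (e.target ∩ B) := (F.measurableSet_pairSet m n).inter hB
    have hswap : Prod.swap ⁻¹' {p | p.1 ∈ e.target ∩ B ∧ p.2 = F.nbr m p.1} =
        {p | p.1 ∈ e.source ∩ e ⁻¹' B ∧ p.2 = F.nbr n p.1} := by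
      ext ⟨a, b⟩
      simp only [mem_preimage, Prod.swap_prod_mk, mem_ofPred_eq, mem_inter_iff]
      constructor
      · rintro ⟨⟨hb, hbB⟩, rfl⟩
        exact ⟨⟨e.map_target hb, (e.right_inv hb).symm ▸ hbB⟩, (e.right_inv hb).symm⟩
      · rintro ⟨⟨ha, haB⟩, rfl⟩
        exact ⟨⟨e.map_source ha, haB⟩, (e.left_inv ha).symm⟩
    have hgraph' : MeasurableSet {p : J × J | p.1 ∈ e.target ∩ B ∧ p.2 = F.nbr m p.1} :=
      (measurable_fst hT').inter
        (measurableSet_eq_fun measurable_snd ((F.measurable_nbr m).comp measurable_fst))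
    rw [Measure.map_apply he hB, Measure.restrict_apply (he hB), Measure.restrict_apply hB,
      inter_comm, inter_comm B]
    calc G.μ (e.source ∩ e ⁻¹' B)
        = F.edgeMeasure {p | p.1 ∈ e.source ∩ e ⁻¹' B ∧ p.2 = F.nbr n p.1} :=
          (F.edgeMeasure_graph hT fun x hx => hx.1.1).symm
      _ = F.edgeMeasure.map Prod.swap {p | p.1 ∈ e.target ∩ B ∧ p.2 = F.nbr m p.1} := by
          rw [Measure.map_apply measurable_swap hgraph', hswap]
      _ = G.μ (e.target ∩ B) := by
          rw [F.map_swap_edgeMeasure, F.edgeMeasure_graph hT' fun x hx => hx.1.1]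

theorem path_isMeasurePreserving : ∀ w, (F.path w).IsMeasurePreserving G.μ G.μ
  | [] => .refl _
  | _ :: w => (F.piece_isMeasurePreserving _ _).trans (path_isMeasurePreserving w)

end Graphing.EdgeEnumeration

namespace Graphing

variable {J : Type*} [MeasurableSpace J]

def componentSetoid (G : Graphing J) : Setoid J where
  r := Relation.ReflTransGen G.E
  iseqv :=
    have : Std.Symm G.E := ⟨G.symm⟩
    ⟨fun _ => .refl, Std.Symm.symm _ _, .trans⟩

theorem exists_isGraphEnumeration_reflTransGen [StandardBorelSpace J] (G : Graphing J) :
    ∃ p : ℕ → PartialEquiv J J, (∀ n, (p n).IsMeasurePreserving G.μ G.μ) ∧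
      IsGraphEnumeration (fun n => (p n).source) (fun n => p n) (Relation.ReflTransGen G.E) := by
  obtain ⟨F⟩ := G.nonempty_edgeEnumeration
  refine exists_isGraphEnumeration_restr (p := fun n => F.path (Denumerable.ofNat _ n))
    (fun n => F.path_isMeasurePreserving _) fun x y => ⟨fun h => ?_, ?_⟩
  · obtain ⟨w, hw, hwxy⟩ := F.exists_path h
    exact ⟨Encodable.encode w, by simpa using hw, by simpa using hwxy⟩
  · rintro ⟨n, hn, rfl⟩
    exact F.reflTransGen_path _ x hn

end Graphing

/-- For a graphing `G`, the partition of its vertex set into connected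
components is a `B`-partition (saturations of Borel sets are Borel) and it has the
re-randomizing property with respect to the underlying measure. -/
theorem Graphing.components_bPartition_and_rerand {J : Type*} [MeasurableSpace J]
    [StandardBorelSpace J] (G : Graphing J) :
    ∃ s : Setoid J,
      (∀ x y : J, s.r x y ↔ Relation.ReflTransGen G.E x y) ∧
      IsBPartition s ∧ HasRerand s G.μ := by
  obtain ⟨p, hp, hpG⟩ := G.exists_isGraphEnumeration_reflTransGen
  exact ⟨G.componentSetoid, fun _ _ => Iff.rfl,
    Setoid.isBPartition_of_rel_iff _ (fun n => (hp n).measurableSet_source)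
      (fun n => (hp n).measurable) hpG.rel_iff,
    G.componentSetoid.hasRerand_of_isGraphEnumeration hp hpG⟩
end

section
/- There exists a graphing G (every component a (2r−1)-regular tree, r ≥ 3) and a Borel partition of its edge set into sets U and W such that ρ(U) + ρ(W) ≥ 2 − 2/r > 1 = ρ(U∪W); hence the normalized rank ρ of a graphing need not be additive, and hyperfiniteness cannot be dropped in the forest lemma. -/
open MeasureTheory

open MeasureTheory Function
open scoped ENNReal

/-!
The graphing is the Bernoulli shift of `Γ = ℤ/2 ∗ ⋯ ∗ ℤ/2` (`2r − 1` factors) on `(ℤ/2)^Γ`,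
restricted to the conull set where `Γ` acts freely, with an edge `ω — gᵢ • ω` for every
generator `gᵢ`; it is measure preserving because the shifts preserve Haar measure. Freeness turns
every component into a copy of the Cayley graph of `Γ`, the `(2r − 1)`-regular tree. Let `U` take
the edges of the first `r` generators and `W` those of the other `r − 1 ≥ 2`. Each of `U`, `W`,
`U ∪ W` contains edges of two distinct generators `gᵢ, gⱼ`, and the alternating words in `gᵢ, gⱼ`
are pairwise distinct, so all their components are infinite and `ρ(U) = ρ(W) = ρ(U ∪ W) = 1`.
-/

lemma Graphing.rho_eq_one_of_forall_infinite {J : Type*} [MeasurableSpace J] (G : Graphing J)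
    {X : Set (J × J)} (hX : ∀ x, (Graphing.compo X x).Infinite) : G.rho X = 1 := by
  have (x : J) : (1 : ℝ) / Nat.card (Graphing.compo X x) = 0 := by
    have := (hX x).to_subtype
    simp
  simp only [Graphing.rho, this, integral_zero, sub_zero]

lemma measure_singleton_eq_inv_card {A : Type*} [AddGroup A] [Fintype A] [MeasurableSpace A]
    [MeasurableSingletonClass A] [MeasurableAdd A] (ν : Measure A) [IsProbabilityMeasure ν]
    [ν.IsAddLeftInvariant] (a : A) : ν {a} = (Fintype.card A : ℝ≥0∞)⁻¹ := by
  have h_eq : ∀ b, ν {b} = ν {a} := fun b => by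
    rw [← measure_preimage_add ν (a - b) {a}]
    congr 1
    ext x
    simp
  have h_sum : (Fintype.card A : ℝ≥0∞) * ν {a} = 1 := by
    simp [← measure_univ (μ := ν), ← Finset.coe_univ, ← sum_measure_singleton, h_eq]
  exact ENNReal.eq_inv_of_mul_eq_one_left (by rwa [mul_comm] at h_sum)

lemma measure_preimage_zero_eq_inv_card {G : Type*} [AddGroup G] [TopologicalSpace G]
    [ContinuousAdd G] [MeasurableSpace G] [BorelSpace G] (μ : Measure G)
    [IsProbabilityMeasure μ] [μ.IsAddHaarMeasure] {A : Type*} [AddGroup A] [Fintype A]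
    [TopologicalSpace A] [DiscreteTopology A] [MeasurableSpace A] [BorelSpace A] (φ : G →+ A)
    (hφ : Continuous φ) (hφ_surj : Surjective φ) :
    μ (φ ⁻¹' {0}) = (Fintype.card A : ℝ≥0∞)⁻¹ := by
  have := Measure.isAddHaarMeasure_map_of_isFiniteMeasure μ φ hφ hφ_surj
  have := Measure.isProbabilityMeasure_map (μ := μ) hφ.aemeasurable
  rw [← Measure.map_apply hφ.measurable (measurableSet_singleton 0)]
  exact measure_singleton_eq_inv_card _ 0

lemma exists_finset_card_eq_forall_inv_mul_notMem {Γ : Type*} [Group Γ] [Infinite Γ] {γ : Γ}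
    (hγ : γ ≠ 1) (n : ℕ) :
    ∃ S : Finset Γ, S.card = n ∧ ∀ g ∈ S, γ⁻¹ * g ∉ S := by
  classical
  induction n with
  | zero => exact ⟨∅, rfl, by simp⟩
  | succ n ih =>
    obtain ⟨S, hcard, hS⟩ := ih
    obtain ⟨x, hx⟩ := Infinite.exists_notMem_finset (S ∪ S.image (γ⁻¹ * ·) ∪ S.image (γ * ·))
    simp only [Finset.mem_union, Finset.mem_image, not_or, not_exists, not_and] at hx
    obtain ⟨⟨hxS, hxγ⟩, hγx⟩ := hx
    refine ⟨insert x S, by rw [Finset.card_insert_of_notMem hxS, hcard], ?_⟩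
    simp only [Finset.mem_insert, forall_eq_or_imp, not_or]
    refine ⟨⟨fun h => hγ (by simpa using h), fun h => hγx _ h (by group)⟩,
      fun g hg => ⟨fun h => hxγ g hg h, hS g hg⟩⟩

/-- The free product of `ι` copies of `ℤ/2`: its Cayley graph with respect to the generators
`gen i` is the `|ι|`-regular tree. -/
abbrev UniversalCoxeter (ι : Type*) := Monoid.CoprodI fun _ : ι => Multiplicative (ZMod 2)

namespace UniversalCoxeter

variable {ι : Type*}

instance [Countable ι] : Countable (UniversalCoxeter ι) := by
  classical
  have : Countable (Monoid.CoprodI.Word fun _ : ι => Multiplicative (ZMod 2)) :=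
    Injective.countable fun _ _ => Monoid.CoprodI.Word.ext
  exact Monoid.CoprodI.Word.equiv.injective.countable

def gen (i : ι) : UniversalCoxeter ι := Monoid.CoprodI.of (i := i) (Multiplicative.ofAdd 1)

lemma gen_mul_self (i : ι) : gen i * gen i = 1 := by
  rw [gen, ← map_mul]
  exact map_one _

def wordProd (l : List ι) : UniversalCoxeter ι := (l.map gen).prod

@[simp] lemma wordProd_nil : wordProd ([] : List ι) = 1 := rfl

@[simp] lemma wordProd_cons (i : ι) (l : List ι) : wordProd (i :: l) = gen i * wordProd l := by
  simp [wordProd]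

def toWord (l : List ι) (hl : l.IsChain (· ≠ ·)) :
    Monoid.CoprodI.Word fun _ : ι => Multiplicative (ZMod 2) where
  toList := l.map fun i => ⟨i, Multiplicative.ofAdd 1⟩
  ne_one := by simp
  chain_ne := (List.isChain_map _).2 (hl.imp fun _ _ => id)

lemma prod_toWord (l : List ι) (hl : l.IsChain (· ≠ ·)) : (toWord l hl).prod = wordProd l := by
  simp only [Monoid.CoprodI.Word.prod, toWord, wordProd, List.map_map]
  rfl

lemma wordProd_injOn {l l' : List ι} (hl : l.IsChain (· ≠ ·)) (hl' : l'.IsChain (· ≠ ·))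
    (h : wordProd l = wordProd l') : l = l' := by
  classical
  have hw : toWord l hl = toWord l' hl' :=
    Monoid.CoprodI.Word.equiv.symm.injective <| show (toWord l hl).prod = (toWord l' hl').prod by
      rwa [prod_toWord, prod_toWord]
  exact List.map_injective_iff.2 (fun i j hij => congrArg Sigma.fst hij)
    (congrArg Monoid.CoprodI.Word.toList hw :
      l.map (fun i => (⟨i, Multiplicative.ofAdd 1⟩ : Σ _ : ι, Multiplicative (ZMod 2))) = _)

lemma eq_singleton_of_wordProd_eq_gen {l : List ι} {i : ι} (hl : l.IsChain (· ≠ ·))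
    (h : wordProd l = gen i) : l = [i] :=
  wordProd_injOn hl (.singleton i) (by simpa using h)

lemma gen_injective : Injective (gen : ι → UniversalCoxeter ι) := fun i j h => by
  simpa using eq_singleton_of_wordProd_eq_gen (.singleton i) (by simpa using h)

def alternating (i j : ι) : ℕ → List ι
  | 0 => []
  | n + 1 => (if Even n then i else j) :: alternating i j n

lemma length_alternating (i j : ι) (n : ℕ) : (alternating i j n).length = n := by
  induction n <;> simp [alternating, *]

lemma isChain_alternating {i j : ι} (hij : i ≠ j) (n : ℕ) :
    (alternating i j n).IsChain (· ≠ ·) := by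
  induction n with
  | zero => exact .nil
  | succ n ih =>
    cases n with
    | zero => exact .singleton _
    | succ m =>
      refine .cons_cons ?_ ih
      rcases Nat.even_or_odd m with hm | hm
      · simp [Nat.even_add_one, hm, hij.symm]
      · simp [Nat.even_add_one, Nat.not_even_iff_odd.2 hm, hij]

lemma wordProd_alternating_injective {i j : ι} (hij : i ≠ j) :
    Injective fun n => wordProd (alternating i j n) := fun n m h => by
  simpa [length_alternating] using
    congrArg List.length (wordProd_injOn (isChain_alternating hij n) (isChain_alternating hij m) h)

instance [Nontrivial ι] : Infinite (UniversalCoxeter ι) :=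
  have ⟨_, _, hij⟩ := exists_pair_ne ι
  .of_injective _ (wordProd_alternating_injective hij)

end UniversalCoxeter

namespace Bernoulli

variable {Γ : Type*} [Group Γ]

def shift (γ : Γ) : (Γ → ZMod 2) →+ (Γ → ZMod 2) where
  toFun ω g := ω (γ⁻¹ * g)
  map_zero' := rfl
  map_add' _ _ := rfl

lemma shift_apply (γ : Γ) (ω : Γ → ZMod 2) (g : Γ) : shift γ ω g = ω (γ⁻¹ * g) := rfl

@[simp] lemma shift_one (ω : Γ → ZMod 2) : shift 1 ω = ω := by
  ext g; simp [shift_apply]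

lemma shift_shift (γ δ : Γ) (ω : Γ → ZMod 2) : shift γ (shift δ ω) = shift (γ * δ) ω := by
  ext g; simp [shift_apply, mul_assoc]

lemma shift_surjective (γ : Γ) : Surjective (shift γ) :=
  fun ω => ⟨shift γ⁻¹ ω, by simp [shift_shift]⟩

lemma continuous_shift (γ : Γ) : Continuous (shift γ) :=
  continuous_pi fun _ => continuous_apply _

def freePart (Γ : Type*) [Group Γ] : Set (Γ → ZMod 2) := {ω | ∀ γ, shift γ ω = ω → γ = 1}

lemma compl_freePart : (freePart Γ)ᶜ = ⋃ (γ : Γ) (_ : γ ≠ 1), fixedPoints (shift γ) := by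
  ext ω
  simp [freePart, IsFixedPt, and_comm]

lemma shift_mem_freePart {ω : Γ → ZMod 2} (hω : ω ∈ freePart Γ) (γ : Γ) :
    shift γ ω ∈ freePart Γ := fun δ hδ => by
  have : shift (γ⁻¹ * δ * γ) ω = ω := by
    rw [← shift_shift, ← shift_shift, hδ, shift_shift, inv_mul_cancel, shift_one]
  exact (conj_eq_one_iff (a := γ⁻¹)).1 (by rw [inv_inv]; exact hω _ this)

instance : SMul Γ (freePart Γ) := ⟨fun γ ω => ⟨shift γ ω, shift_mem_freePart ω.2 γ⟩⟩

lemma coe_smul (γ : Γ) (ω : freePart Γ) : ((γ • ω : freePart Γ) : Γ → ZMod 2) = shift γ ω := rfl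

instance : MulAction Γ (freePart Γ) where
  one_smul ω := Subtype.ext ((coe_smul 1 ω).trans (shift_one _))
  mul_smul γ δ ω := Subtype.ext (shift_shift γ δ ω).symm

lemma freePart_smul_left_injective (ω : freePart Γ) : Injective (· • ω : Γ → freePart Γ) :=
  fun γ δ h => by
    have : shift (δ⁻¹ * γ) ω = ω := by
      rw [← shift_shift, ← coe_smul, show γ • ω = δ • ω from h, coe_smul, shift_shift,
        inv_mul_cancel, shift_one]
    simpa [inv_mul_eq_one, eq_comm] using ω.2 _ this

section Schreier

variable {ι : Type*}

def colorEdges (s : ι → Γ) (S : Set ι) : Set (freePart Γ × freePart Γ) :=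
  {(x, y) | ∃ i ∈ S, y = s i • x}

variable {s : ι → Γ}

@[simp] lemma mem_colorEdges {S : Set ι} {x y : freePart Γ} :
    (x, y) ∈ colorEdges s S ↔ ∃ i ∈ S, y = s i • x := Iff.rfl

lemma colorEdges_symm (hs : ∀ i, s i * s i = 1) {S : Set ι} {x y : freePart Γ}
    (h : (x, y) ∈ colorEdges s S) : (y, x) ∈ colorEdges s S := by
  obtain ⟨i, hi, hy⟩ := h
  refine ⟨i, hi, ?_⟩
  rw [show y = s i • x from hy, smul_smul, hs, one_smul]

lemma colorEdges_mono {S T : Set ι} (h : S ⊆ T) : colorEdges s S ⊆ colorEdges s T :=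
  fun _ ⟨i, hi, hp⟩ => ⟨i, h hi, hp⟩

lemma colorEdges_union (S T : Set ι) :
    colorEdges s S ∪ colorEdges s T = colorEdges s (S ∪ T) := by
  ext p
  simp [colorEdges, or_and_right, exists_or]

lemma disjoint_colorEdges (hs : Injective s) {S T : Set ι} (h : Disjoint S T) :
    Disjoint (colorEdges s S) (colorEdges s T) := by
  rw [Set.disjoint_left]
  rintro ⟨x, y⟩ ⟨i, hi, hy⟩ ⟨j, hj, hy'⟩
  exact h.ne_of_mem hi hj (hs (freePart_smul_left_injective x (hy.symm.trans hy')))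

lemma neighbors_colorEdges (S : Set ι) (x : freePart Γ) :
    {y | (x, y) ∈ colorEdges s S} = (· • x) ∘ s '' S := by
  ext y
  simp [colorEdges, eq_comm]

lemma ncard_neighbors_colorEdges (hs : Injective s) (S : Set ι) (x : freePart Γ) :
    {y | (x, y) ∈ colorEdges s S}.ncard = S.ncard := by
  rw [neighbors_colorEdges,
    Set.ncard_image_of_injective _ ((freePart_smul_left_injective x).comp hs)]

lemma ncard_neighbors_colorEdges_univ [Fintype ι] (hs : Injective s) (x : freePart Γ) :
    {y | (x, y) ∈ colorEdges s Set.univ}.ncard = Fintype.card ι := by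
  rw [ncard_neighbors_colorEdges hs, Set.ncard_univ, Nat.card_eq_fintype_card]

lemma ncard_inter_neighbors [Fintype ι] (hs : Injective s) (B : Set (freePart Γ))
    (x : freePart Γ) :
    (({y ∈ B | (x, y) ∈ colorEdges s Set.univ}.ncard : ℕ) : ℝ) =
      ∑ i, B.indicator 1 (s i • x) := by
  classical
  have : {y ∈ B | (x, y) ∈ colorEdges s Set.univ} = (· • x) ∘ s '' {i | s i • x ∈ B} := by
    ext y
    simp only [mem_colorEdges, Set.mem_univ, true_and, Set.mem_image,
      Set.mem_ofPred_eq, comp_apply]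
    constructor
    · rintro ⟨hy, i, rfl⟩
      exact ⟨i, hy, rfl⟩
    · rintro ⟨i, hi, rfl⟩
      exact ⟨hi, i, rfl⟩
  rw [this, Set.ncard_image_of_injective _ ((freePart_smul_left_injective x).comp hs),
    Set.ncard_eq_toFinset_card', Set.toFinset_ofPred, Finset.card_filter]
  simp [Set.indicator_apply]

end Schreier

variable [Countable Γ]

/-- The Haar probability measure of the compact group `(ℤ/2)^Γ`, i.e. the Bernoulli(1/2)
product measure. -/
noncomputable def bernoulli (Γ : Type*) [Group Γ] [Countable Γ] : Measure (Γ → ZMod 2) :=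
  Measure.addHaarMeasure ⊤

instance : (bernoulli Γ).IsAddHaarMeasure := by
  unfold bernoulli; infer_instance

instance : IsProbabilityMeasure (bernoulli Γ) :=
  ⟨Measure.addHaarMeasure_self (K₀ := (⊤ : TopologicalSpace.PositiveCompacts (Γ → ZMod 2)))⟩

lemma measurePreserving_shift (γ : Γ) :
    MeasurePreserving (shift γ) (bernoulli Γ) (bernoulli Γ) where
  measurable := (continuous_shift γ).measurable
  map_eq := by
    have := Measure.isAddHaarMeasure_map_of_isFiniteMeasure (bernoulli Γ) (shift γ)
      (continuous_shift γ) (shift_surjective γ)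
    have := Measure.isProbabilityMeasure_map (μ := bernoulli Γ) (continuous_shift γ).aemeasurable
    exact Measure.isAddHaarMeasure_eq_of_isProbabilityMeasure _ _

/-- As `S` and `γ⁻¹ S` are disjoint, the `|S|` differences `ω g - ω (γ⁻¹ g)`, `g ∈ S`, are
independent fair bits; all of them vanish on a fixed point of `shift γ`. -/
lemma bernoulli_fixedPoints_le {γ : Γ} {S : Finset Γ} (hS : ∀ g ∈ S, γ⁻¹ * g ∉ S) :
    bernoulli Γ (fixedPoints (shift γ)) ≤ (2 ^ S.card)⁻¹ := by
  classical
  let φ : (Γ → ZMod 2) →+ (S → ZMod 2) :=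
    AddMonoidHom.mk' (fun ω g => ω g - ω (γ⁻¹ * g)) fun ω ω' => by
      ext g; simp only [Pi.add_apply]; abel
  have hφ : Continuous φ :=
    continuous_pi fun g => show Continuous fun ω : Γ → ZMod 2 => ω g - ω (γ⁻¹ * g) by fun_prop
  have hφ_surj : Surjective φ := fun v => by
    refine ⟨extend (↑) v 0, funext fun g => ?_⟩
    have hg : ¬∃ h : S, (h : Γ) = γ⁻¹ * g := fun ⟨h, hh⟩ => hS g g.2 (hh ▸ h.2)
    simp [φ, extend_apply' _ _ _ hg]
  have h_sub : fixedPoints (shift γ) ⊆ φ ⁻¹' {0} := fun ω hω => by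
    ext g
    simpa [φ, sub_eq_zero, shift_apply] using (congrFun hω g).symm
  calc bernoulli Γ (fixedPoints (shift γ)) ≤ bernoulli Γ (φ ⁻¹' {0}) := measure_mono h_sub
    _ = (2 ^ S.card)⁻¹ := by
      rw [measure_preimage_zero_eq_inv_card _ φ hφ hφ_surj]
      simp

lemma bernoulli_fixedPoints [Infinite Γ] {γ : Γ} (hγ : γ ≠ 1) :
    bernoulli Γ (fixedPoints (shift γ)) = 0 := by
  by_contra h
  obtain ⟨n, hn⟩ := ENNReal.exists_inv_two_pow_lt h
  obtain ⟨S, rfl, hS⟩ := exists_finset_card_eq_forall_inv_mul_notMem hγ n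
  exact (bernoulli_fixedPoints_le hS).not_gt (by rwa [ENNReal.inv_pow])

lemma measurableSet_freePart : MeasurableSet (freePart Γ) := by
  rw [← compl_compl (freePart Γ), compl_freePart]
  exact .compl <| .iUnion fun γ => .iUnion fun _ =>
    (isClosed_fixedPoints (continuous_shift γ)).measurableSet

lemma bernoulli_freePart [Infinite Γ] : bernoulli Γ (freePart Γ) = 1 := by
  rw [← prob_compl_eq_zero_iff measurableSet_freePart, compl_freePart]
  exact measure_iUnion_null fun γ => measure_iUnion_null fun hγ => bernoulli_fixedPoints hγ

instance : StandardBorelSpace (freePart Γ) := measurableSet_freePart.standardBorel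

noncomputable def freeMeasure (Γ : Type*) [Group Γ] [Countable Γ] : Measure (freePart Γ) :=
  (bernoulli Γ).comap Subtype.val

instance [Infinite Γ] : IsProbabilityMeasure (freeMeasure Γ) := by
  constructor
  rw [freeMeasure, comap_subtype_coe_apply measurableSet_freePart, Set.image_univ,
    Subtype.range_coe, bernoulli_freePart]

lemma measurable_smul_freePart (γ : Γ) : Measurable (γ • · : freePart Γ → freePart Γ) :=
  ((continuous_shift γ).measurable.comp measurable_subtype_coe).subtype_mk

lemma measurePreserving_smul (γ : Γ) :
    MeasurePreserving (γ • · : freePart Γ → freePart Γ) (freeMeasure Γ) (freeMeasure Γ) := by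
  have hval := MeasurableEmbedding.subtype_coe (measurableSet_freePart (Γ := Γ))
  have h_pre : shift γ ⁻¹' freePart Γ = freePart Γ := by
    ext ω
    refine ⟨fun h => ?_, fun h => shift_mem_freePart h γ⟩
    simpa [shift_shift] using shift_mem_freePart h γ⁻¹
  have h_restrict : (bernoulli Γ).restrict (freePart Γ) =
      ((bernoulli Γ).restrict (freePart Γ)).map (shift γ) := by
    simpa [h_pre] using ((measurePreserving_shift γ).restrict_preimage
      (measurableSet_freePart (Γ := Γ))).map_eq.symm
  refine ⟨measurable_smul_freePart γ, hval.map_injective ?_⟩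
  rw [Measure.map_map hval.measurable (measurable_smul_freePart γ),
    show Subtype.val ∘ (γ • ·) = shift γ ∘ Subtype.val from rfl,
    ← Measure.map_map (continuous_shift γ).measurable hval.measurable, freeMeasure,
    map_comap_subtype_coe measurableSet_freePart, ← h_restrict]

lemma measure_inter_preimage_smul_comm {γ : Γ} (hγ : γ * γ = 1) {A B : Set (freePart Γ)}
    (hA : MeasurableSet A) (hB : MeasurableSet B) :
    freeMeasure Γ (A ∩ (γ • ·) ⁻¹' B) = freeMeasure Γ (B ∩ (γ • ·) ⁻¹' A) := by
  have : A ∩ (γ • ·) ⁻¹' B = (γ • ·) ⁻¹' (B ∩ (γ • ·) ⁻¹' A) := by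
    ext x
    simp [smul_smul, hγ, and_comm]
  rw [this, (measurePreserving_smul γ).measure_preimage
    (hB.inter (measurable_smul_freePart γ hA)).nullMeasurableSet]

lemma measurableSet_colorEdges {ι : Type*} (s : ι → Γ) (S : Set ι) :
    MeasurableSet (colorEdges s S) := by
  have : colorEdges s S = ⋃ γ ∈ s '' S, {p | p.2 = γ • p.1} := by
    ext p
    simp [colorEdges]
  rw [this]
  exact .biUnion (Set.to_countable _) fun γ _ =>
    measurableSet_eq_fun measurable_snd ((measurable_smul_freePart γ).comp measurable_fst)

section SchreierGraphing

variable [Infinite Γ] {ι : Type*} [Fintype ι] {s : ι → Γ}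

lemma setIntegral_ncard_inter_neighbors (hs : Injective s) (A : Set (freePart Γ))
    {B : Set (freePart Γ)} (hB : MeasurableSet B) :
    ∫ x in A, (({y ∈ B | (x, y) ∈ colorEdges s Set.univ}.ncard : ℕ) : ℝ) ∂freeMeasure Γ =
      ∑ i, (freeMeasure Γ).real (A ∩ (s i • ·) ⁻¹' B) := by
  have h_pre (i : ι) : MeasurableSet ((s i • ·) ⁻¹' B) := measurable_smul_freePart (s i) hB
  have h_ind (i : ι) (x : freePart Γ) :
      B.indicator 1 (s i • x) = ((s i • ·) ⁻¹' B).indicator (1 : freePart Γ → ℝ) x := rfl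
  simp_rw [ncard_inter_neighbors hs, h_ind]
  rw [integral_finsetSum _ fun i _ => ?_]
  swap
  · exact ((integrable_const 1).indicator (h_pre i)).integrableOn
  refine Finset.sum_congr rfl fun i _ => ?_
  rw [integral_indicator_one (h_pre i), measureReal_restrict_apply (h_pre i), Set.inter_comm]

lemma setIntegral_ncard_inter_neighbors_comm (hs : ∀ i, s i * s i = 1) (hs_inj : Injective s)
    (A B : Set (freePart Γ)) (hA : MeasurableSet A) (hB : MeasurableSet B) :
    ∫ x in A, (({y ∈ B | (x, y) ∈ colorEdges s Set.univ}.ncard : ℕ) : ℝ) ∂freeMeasure Γ =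
      ∫ x in B, (({y ∈ A | (x, y) ∈ colorEdges s Set.univ}.ncard : ℕ) : ℝ) ∂freeMeasure Γ := by
  simp only [setIntegral_ncard_inter_neighbors hs_inj _ hA,
    setIntegral_ncard_inter_neighbors hs_inj _ hB, measureReal_def,
    measure_inter_preimage_smul_comm (hs _) hA hB]

noncomputable def schreierGraphing (hs : ∀ i, s i * s i = 1) (hs_inj : Injective s) :
    Graphing (freePart Γ) where
  E x y := (x, y) ∈ colorEdges s Set.univ
  symm _ _ := colorEdges_symm hs
  measE := measurableSet_colorEdges s Set.univ
  μ := freeMeasure Γ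
  prob := inferInstance
  D := Fintype.card ι
  degFin x := by
    rw [neighbors_colorEdges]
    exact Set.toFinite _
  degBound x := (ncard_neighbors_colorEdges_univ hs_inj x).le
  mp := setIntegral_ncard_inter_neighbors_comm hs hs_inj

variable (hs : ∀ i, s i * s i = 1) (hs_inj : Injective s)

lemma isEdgeSubset_colorEdges (S : Set ι) :
    (schreierGraphing hs hs_inj).IsEdgeSubset (colorEdges s S) :=
  ⟨measurableSet_colorEdges s S, fun _ _ => colorEdges_symm hs, colorEdges_mono S.subset_univ⟩

end SchreierGraphing

end Bernoulli

namespace UniversalCoxeter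

open Bernoulli

variable {ι : Type*}

lemma exists_wordProd_of_reflTransGen_avoiding {x u : freePart (UniversalCoxeter ι)} {i : ι}
    (h : Relation.ReflTransGen
      (fun u v => (u, v) ∈ colorEdges gen Set.univ ∧ ¬(u = x ∧ v = gen i • x)) x u) :
    ∃ l : List ι, l.IsChain (· ≠ ·) ∧ u = wordProd l • x ∧ l.getLast? ≠ some i := by
  induction h with
  | refl => exact ⟨[], .nil, by simp, by simp⟩
  | tail _ hstep ih =>
    obtain ⟨l, hl, rfl, hlast⟩ := ih
    obtain ⟨⟨j, -, rfl⟩, h_avoid⟩ := hstep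
    rw [smul_smul]
    match l, hl, hlast with
    | [], _, _ =>
      refine ⟨[j], .singleton j, by simp, ?_⟩
      rintro ⟨⟩
      simp at h_avoid
    | k :: t, hl, hlast =>
      by_cases hjk : j = k
      · subst hjk
        refine ⟨t, hl.tail, by rw [wordProd_cons, ← mul_assoc, gen_mul_self, one_mul], ?_⟩
        cases t with
        | nil => simp
        | cons => rwa [List.getLast?_cons_cons] at hlast
      · refine ⟨j :: k :: t, .cons_cons hjk hl, by simp, ?_⟩
        rwa [List.getLast?_cons_cons]

/-- A walk from `x` to `gen i • x` avoiding the edge between them would spell a reduced word for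
`gen i` other than `[i]`. -/
lemma isForestSet_colorEdges_gen :
    Graphing.IsForestSet (colorEdges (gen : ι → UniversalCoxeter ι) Set.univ) := by
  rintro x _ ⟨i, -, rfl⟩ hpath
  obtain ⟨l, hl, hx, hlast⟩ := exists_wordProd_of_reflTransGen_avoiding
    (Relation.ReflTransGen.mono (fun _ _ h => ⟨h.1, fun h' => h.2 (.inl h')⟩) _ _ hpath)
  have : l = [i] := eq_singleton_of_wordProd_eq_gen hl (freePart_smul_left_injective x hx).symm
  simp [this] at hlast

lemma compo_colorEdges_gen_infinite {S : Set ι} {i j : ι} (hi : i ∈ S) (hj : j ∈ S) (hij : i ≠ j)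
    (x : freePart (UniversalCoxeter ι)) : (Graphing.compo (colorEdges gen S) x).Infinite := by
  have hmem (n : ℕ) : wordProd (alternating i j n) • x ∈ Graphing.compo (colorEdges gen S) x := by
    induction n with
    | zero =>
      rw [alternating, wordProd_nil, one_smul]
      exact .refl
    | succ n ih =>
      refine ih.tail ⟨_, ?_, by rw [alternating, wordProd_cons, mul_smul]⟩
      split_ifs <;> assumption
  exact Set.infinite_of_injective_forall_mem
    ((freePart_smul_left_injective x).comp (wordProd_alternating_injective hij)) hmem

lemma rho_colorEdges_gen [Fintype ι] [Nontrivial ι] {S : Set ι} {i j : ι} (hi : i ∈ S)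
    (hj : j ∈ S) (hij : i ≠ j) :
    (schreierGraphing gen_mul_self gen_injective).rho (colorEdges gen S) = 1 :=
  Graphing.rho_eq_one_of_forall_infinite _ (compo_colorEdges_gen_infinite hi hj hij)

end UniversalCoxeter

open Bernoulli UniversalCoxeter

/-- For every `r ≥ 3` there is a graphing `G`, every component of which
is a `(2r−1)`-regular tree, and a Borel partition of its edge set into sets `U` and `W`
with `ρ(U) + ρ(W) ≥ 2 − 2/r > 1 = ρ(U ∪ W)`; hence the normalized rank of a graphing need
not be additive. -/
theorem Graphing.rho_not_additive (r : ℕ) (hr : 3 ≤ r) :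
    ∃ (J : Type) (m : MeasurableSpace J) (_ : StandardBorelSpace J) (G : Graphing J)
      (U W : Set (J × J)),
      G.IsForest ∧ (∀ x : J, ({y | G.E x y}).ncard = 2 * r - 1) ∧
      G.IsEdgeSubset U ∧ G.IsEdgeSubset W ∧ U ∪ W = G.edgeSet ∧ U ∩ W = ∅ ∧
      2 - 2 / (r : ℝ) ≤ G.rho U + G.rho W ∧ (1 : ℝ) < 2 - 2 / (r : ℝ) ∧
      G.rho (U ∪ W) = 1 := by
  have : Nontrivial (Fin (2 * r - 1)) := Fin.nontrivial_iff_two_le.2 (by omega)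
  let S : Set (Fin (2 * r - 1)) := {i | i.val < r}
  have h_rho_S := rho_colorEdges_gen (S := S) (i := ⟨0, by omega⟩) (j := ⟨1, by omega⟩)
    (show 0 < r by omega) (show 1 < r by omega) (by simp)
  have h_rho_Sc := rho_colorEdges_gen (S := Sᶜ) (i := ⟨r, by omega⟩) (j := ⟨r + 1, by omega⟩)
    (show ¬r < r by omega) (show ¬r + 1 < r by omega) (by simp)
  have h_union : colorEdges gen S ∪ colorEdges gen Sᶜ = colorEdges gen Set.univ := by
    rw [colorEdges_union, Set.union_compl_self]
  have h_r : (1 : ℝ) < 2 - 2 / r := by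
    have : (2 : ℝ) / r < 1 := (div_lt_one (by positivity)).2 (by exact_mod_cast (by omega : 2 < r))
    linarith
  refine ⟨_, _, inferInstance, schreierGraphing gen_mul_self gen_injective, colorEdges gen S,
    colorEdges gen Sᶜ, isForestSet_colorEdges_gen, fun x => ?_, isEdgeSubset_colorEdges _ _ S,
    isEdgeSubset_colorEdges _ _ Sᶜ, h_union, ?_, ?_, h_r, ?_⟩
  · exact (ncard_neighbors_colorEdges_univ gen_injective x).trans (Fintype.card_fin _)
  · exact Set.disjoint_iff_inter_eq_empty.1 (disjoint_colorEdges gen_injective disjoint_compl_right)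
  · rw [h_rho_S, h_rho_Sc]
    linarith [show 0 ≤ 2 / (r : ℝ) by positivity]
  · rw [h_union]
    exact rho_colorEdges_gen (i := ⟨0, by omega⟩) (j := ⟨1, by omega⟩) (Set.mem_univ _)
      (Set.mem_univ _) (by simp)
end

section
/- If a sequence of finite graphs G_n with degrees uniformly bounded by D locally (Benjamini–Schramm) converges to a graphing G, then the normalized total ranks converge: r̄(G_n) = 1 − E_u(1/|component of u|) = rank(cycle matroid of G_n)/|V(G_n)| → r̄(G) = 1 − E_x(1/|V(G_x)|). -/
/-!
Write `f_r(x) = 1 / |B_r(x)|` for the size of the rooted `r`-ball. Until the ball exhausts the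
component of `x` it gains a vertex at every step, so `0 ≤ f_r(x) - 1 / |C(x)| ≤ 1 / (r + 1)`
in every graph of finite degree, uniformly in `x`. For fixed `r`, `f_r` is a finite linear
combination of indicators of the events "the rooted `r`-ball is isomorphic to the pattern `A`",
so local convergence gives convergence of the averages of `f_r`, and the uniform approximation
in `r` lets the limits be exchanged. On the graphing these events are Borel, by a
Lusin–Novikov argument for projections of Borel sets with boundedly finite sections.
-/

open MeasureTheory

/-- The connected component of `x` under the adjacency relation `E`. -/
def compoRel {V : Type*} (E : V → V → Prop) (x : V) : Set V :=
  {y | Relation.ReflTransGen E x y}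

/-- The ball of radius `k` around `x` under the adjacency relation `E`. -/
def ballRel {V : Type*} (E : V → V → Prop) : ℕ → V → Set V
  | 0, x => {x}
  | (k + 1), x => ballRel E k x ∪ {y | ∃ z ∈ ballRel E k x, E z y}

/-- The rooted `r`-ball around `x` in the graph `(V, E)` is isomorphic (as a rooted graph)
to the pattern graph on `Fin (m + 1)` with adjacency `A` and root `0`. -/
def BallIso {V : Type*} (E : V → V → Prop) (x : V) (r m : ℕ)
    (A : Fin (m + 1) → Fin (m + 1) → Prop) : Prop :=
  ∃ e : {y // y ∈ ballRel E r x} ≃ Fin (m + 1),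
    (∀ y : {y // y ∈ ballRel E r x}, (y : V) = x ↔ e y = 0) ∧
    (∀ y z : {y // y ∈ ballRel E r x}, E (y : V) (z : V) ↔ A (e y) (e z))

/-- The normalized total rank of a finite graph `(V, E)`:
`1 − E_u(1/|component of u|)`, which equals `rank(cycle matroid)/|V| = (|V| − c)/|V|`. -/
noncomputable def finTotalRank (V : Type*) [Fintype V] (E : V → V → Prop) : ℝ :=
  1 - (∑ u : V, (1 : ℝ) / (Nat.card ↥(compoRel E u))) / (Fintype.card V)

open Set Filter

section Balls

variable {V : Type*} {E : V → V → Prop} {D : ℕ}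

theorem ballRel_mono {x : V} : Monotone (fun k => ballRel E k x) :=
  monotone_nat_of_le_succ fun _ => subset_union_left

theorem mem_ballRel_self {k : ℕ} {x : V} : x ∈ ballRel E k x :=
  ballRel_mono (Nat.zero_le k) rfl

theorem ballRel_succ_eq_biUnion (k : ℕ) (x : V) :
    ballRel E (k + 1) x = ⋃ z ∈ ballRel E k x, insert z {y | E z y} := by
  ext y
  simp only [ballRel, mem_union, mem_ofPred_eq, mem_iUnion, mem_insert_iff, exists_prop]
  constructor
  · rintro (hy | ⟨z, hz, hzy⟩)
    exacts [⟨y, hy, Or.inl rfl⟩, ⟨z, hz, Or.inr hzy⟩]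
  · rintro ⟨z, hz, rfl | hzy⟩
    exacts [Or.inl hz, Or.inr ⟨z, hz, hzy⟩]

theorem mem_compoRel_iff_exists_mem_ballRel {x y : V} :
    y ∈ compoRel E x ↔ ∃ k, y ∈ ballRel E k x := by
  constructor
  · intro h
    induction h with
    | refl => exact ⟨0, rfl⟩
    | tail _ hbc ih =>
      obtain ⟨k, hk⟩ := ih
      exact ⟨k + 1, Or.inr ⟨_, hk, hbc⟩⟩
  · rintro ⟨k, hk⟩
    induction k generalizing y with
    | zero => exact hk ▸ Relation.ReflTransGen.refl
    | succ k ih =>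
      rcases hk with hk | ⟨z, hz, hzy⟩
      exacts [ih hk, (ih hz).tail hzy]

theorem ballRel_subset_compoRel (k : ℕ) (x : V) : ballRel E k x ⊆ compoRel E x :=
  fun _ hy => mem_compoRel_iff_exists_mem_ballRel.2 ⟨k, hy⟩

theorem compoRel_eq_ballRel_of_succ_eq {k : ℕ} {x : V}
    (h : ballRel E (k + 1) x = ballRel E k x) : compoRel E x = ballRel E k x := by
  have hstable : ∀ j, ballRel E (k + j) x = ballRel E k x := by
    intro j
    induction j with
    | zero => rfl
    | succ j ih => rw [← add_assoc, ballRel, ih]; exact h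
  refine (ballRel_subset_compoRel k x).antisymm' fun y hy => ?_
  obtain ⟨j, hj⟩ := mem_compoRel_iff_exists_mem_ballRel.1 hy
  exact hstable j ▸ ballRel_mono (Nat.le_add_left j k) hj

theorem encard_ballRel_le (hdeg : ∀ z, {y | E z y}.encard ≤ D) (k : ℕ) (x : V) :
    (ballRel E k x).encard ≤ ((D + 1) ^ k : ℕ) := by
  induction k with
  | zero => simp [ballRel]
  | succ k ih =>
    have hfin := finite_of_encard_le_coe ih
    rw [ballRel_succ_eq_biUnion, ← hfin.coe_toFinset]
    calc (⋃ z ∈ hfin.toFinset, insert z {y | E z y}).encard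
        ≤ ∑ z ∈ hfin.toFinset, (insert z {y | E z y}).encard :=
          Finset.set_encard_biUnion_le _ _
      _ ≤ ∑ _z ∈ hfin.toFinset, ((D + 1 : ℕ) : ℕ∞) :=
          Finset.sum_le_sum fun z _ =>
            (encard_insert_le _ z).trans (by push_cast; gcongr; exact hdeg z)
      _ = (hfin.toFinset.card : ℕ∞) * (D + 1 : ℕ) := by simp; ring
      _ ≤ ((D + 1) ^ k : ℕ) * (D + 1 : ℕ) := by
          rw [← encard_coe_eq_coe_finsetCard, hfin.coe_toFinset]
          gcongr
      _ = ((D + 1) ^ (k + 1) : ℕ) := by push_cast; ring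

theorem ballRel_finite (hdeg : ∀ z, {y | E z y}.encard ≤ D) (k : ℕ) (x : V) :
    (ballRel E k x).Finite :=
  finite_of_encard_le_coe (encard_ballRel_le hdeg k x)

theorem ncard_ballRel_pos (hdeg : ∀ z, {y | E z y}.encard ≤ D) (k : ℕ) (x : V) :
    0 < (ballRel E k x).ncard :=
  (ncard_pos (ballRel_finite hdeg k x)).2 ⟨x, mem_ballRel_self⟩

theorem compoRel_eq_ballRel_or_lt_ncard (hdeg : ∀ z, {y | E z y}.encard ≤ D) (k : ℕ) (x : V) :
    compoRel E x = ballRel E k x ∨ k < (ballRel E k x).ncard := by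
  induction k with
  | zero => exact Or.inr (ncard_ballRel_pos hdeg 0 x)
  | succ k ih =>
    by_cases hstab : ballRel E (k + 1) x = ballRel E k x
    · exact Or.inl (hstab ▸ compoRel_eq_ballRel_of_succ_eq hstab)
    rcases ih with h | h
    · exact absurd (((ballRel_subset_compoRel (k + 1) x).trans h.subset).antisymm
        subset_union_left) hstab
    · have : (ballRel E k x).ncard < (ballRel E (k + 1) x).ncard :=
        ncard_lt_ncard (subset_union_left.ssubset_of_ne (Ne.symm hstab))
          (ballRel_finite hdeg (k + 1) x)
      exact Or.inr (by omega)

theorem one_div_card_compoRel_le_one_div_ncard_ballRel (hdeg : ∀ z, {y | E z y}.encard ≤ D)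
    (r : ℕ) (x : V) :
    (1 : ℝ) / Nat.card (compoRel E x) ≤ 1 / (ballRel E r x).ncard := by
  rw [Nat.card_coe_set_eq]
  by_cases hC : (compoRel E x).Finite
  · apply one_div_le_one_div_of_le (by exact_mod_cast ncard_ballRel_pos hdeg r x)
    exact_mod_cast ncard_le_ncard (ballRel_subset_compoRel r x) hC
  · rw [Infinite.ncard hC, Nat.cast_zero, div_zero]
    positivity

theorem abs_one_div_ncard_ballRel_sub_le (hdeg : ∀ z, {y | E z y}.encard ≤ D) (r : ℕ)
    (x : V) :
    |1 / ((ballRel E r x).ncard : ℝ) - 1 / Nat.card (compoRel E x)| ≤ 1 / (r + 1) := by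
  rcases compoRel_eq_ballRel_or_lt_ncard hdeg r x with h | h
  · rw [Nat.card_coe_set_eq, h, sub_self, abs_zero]
    positivity
  · have hball : 1 / ((ballRel E r x).ncard : ℝ) ≤ 1 / (r + 1) := by
      gcongr
      exact_mod_cast h
    have hcompo := one_div_card_compoRel_le_one_div_ncard_ballRel hdeg r x
    have : (0 : ℝ) ≤ 1 / Nat.card (compoRel E x) := by positivity
    rw [abs_le]
    constructor <;> linarith

theorem tendsto_one_div_ncard_ballRel (hdeg : ∀ z, {y | E z y}.encard ≤ D) (x : V) :
    Tendsto (fun r : ℕ => 1 / ((ballRel E r x).ncard : ℝ)) atTop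
      (nhds (1 / Nat.card (compoRel E x))) :=
  tendsto_iff_norm_sub_tendsto_zero.2 <| squeeze_zero_norm
    (fun r => by rw [norm_norm, Real.norm_eq_abs]; exact abs_one_div_ncard_ballRel_sub_le hdeg r x)
    tendsto_one_div_add_atTop_nhds_zero_nat

end Balls

def PatternIso {m : ℕ} (A A' : Fin (m + 1) → Fin (m + 1) → Prop) : Prop :=
  ∃ σ : Equiv.Perm (Fin (m + 1)), σ 0 = 0 ∧ ∀ i j, A i j ↔ A' (σ i) (σ j)

/-- Dividing by the size of the isomorphism class makes the weights of all patterns of a given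
`r`-ball add up to `1 / |ball|` (see `one_div_ncard_ballRel_eq_sum`). -/
noncomputable def patternWeight {m : ℕ} (A : Fin (m + 1) → Fin (m + 1) → Prop) : ℝ :=
  1 / ((m + 1) * {A' | PatternIso A A'}.ncard)

section Patterns

variable {V : Type*} {E : V → V → Prop} {x : V} {r m : ℕ}
  {A A' : Fin (m + 1) → Fin (m + 1) → Prop}

theorem BallIso.ncard_ballRel (h : BallIso E x r m A) : (ballRel E r x).ncard = m + 1 := by
  obtain ⟨e, -, -⟩ := h
  rw [← Nat.card_coe_set_eq, Nat.card_congr e, Nat.card_eq_fintype_card, Fintype.card_fin]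

theorem BallIso.patternIso (h : BallIso E x r m A) (h' : BallIso E x r m A') :
    PatternIso A A' := by
  obtain ⟨e, hroot, hadj⟩ := h
  obtain ⟨e', hroot', hadj'⟩ := h'
  refine ⟨e.symm.trans e', (hroot' _).1 ((hroot _).2 (e.apply_symm_apply 0)), fun i j => ?_⟩
  simpa using (hadj (e.symm i) (e.symm j)).symm.trans (hadj' (e.symm i) (e.symm j))

theorem BallIso.of_patternIso (h : BallIso E x r m A) (hA : PatternIso A A') :
    BallIso E x r m A' := by
  obtain ⟨e, hroot, hadj⟩ := h
  obtain ⟨σ, hσ, hσadj⟩ := hA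
  refine ⟨e.trans σ, fun y => (hroot y).trans ?_, fun y z => (hadj y z).trans (hσadj _ _)⟩
  rw [Equiv.trans_apply, ← hσ, σ.injective.eq_iff, hσ]

theorem BallIso.setOf_ballIso_eq (h : BallIso E x r m A) :
    {A' | BallIso E x r m A'} = {A' | PatternIso A A'} :=
  Set.ext fun _ => ⟨h.patternIso, h.of_patternIso⟩

theorem exists_ballIso (hfin : (ballRel E r x).Finite) (hcard : (ballRel E r x).ncard = m + 1) :
    ∃ A, BallIso E x r m A := by
  have : Fintype (ballRel E r x) := hfin.fintype
  have hx : x ∈ ballRel E r x := mem_ballRel_self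
  let e₀ : ballRel E r x ≃ Fin (m + 1) := Fintype.equivFinOfCardEq <| by
    rwa [← Nat.card_eq_fintype_card, Nat.card_coe_set_eq]
  let e := e₀.trans (Equiv.swap (e₀ ⟨x, hx⟩) 0)
  have hroot : e ⟨x, hx⟩ = 0 := Equiv.swap_apply_left _ _
  refine ⟨fun i j => E (e.symm i) (e.symm j), e, fun y => ?_, fun y z => by simp⟩
  rw [← hroot, e.injective.eq_iff, Subtype.ext_iff]

open Classical in
theorem one_div_ncard_ballRel_eq_sum {D M : ℕ} (hdeg : ∀ z, {y | E z y}.encard ≤ D)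
    (hM : (D + 1) ^ r ≤ M) :
    1 / ((ballRel E r x).ncard : ℝ) = ∑ m ∈ Finset.range M,
      ∑ A, {y | BallIso E y r m A}.indicator (fun _ => patternWeight A) x := by
  have hfin := ballRel_finite hdeg r x
  have hle := (encard_le_coe_iff_finite_ncard_le.1 (encard_ballRel_le hdeg r x)).2
  obtain ⟨n, hn⟩ : ∃ n, (ballRel E r x).ncard = n + 1 :=
    Nat.exists_eq_add_one.2 (ncard_ballRel_pos hdeg r x)
  rw [Finset.sum_eq_single_of_mem n (Finset.mem_range.2 (by omega)) fun m _ hm =>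
    Finset.sum_eq_zero fun A _ => indicator_of_notMem (fun h => hm (by
      have := h.ncard_ballRel; omega)) _]
  obtain ⟨A₀, hA₀⟩ := exists_ballIso hfin hn
  simp only [indicator_apply, mem_ofPred_eq]
  rw [Finset.sum_ite, Finset.sum_const_zero, add_zero]
  set P := Finset.univ.filter fun A => BallIso E x r n A
  have hP : {A | BallIso E x r n A}.ncard = P.card := by
    rw [← ncard_coe_finset, Finset.coe_filter_univ]
  have hw : ∀ A ∈ P, patternWeight A = 1 / ((n + 1) * P.card) := fun A hA => by
    rw [patternWeight, ← (Finset.mem_filter.1 hA).2.setOf_ballIso_eq, hP]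
  have hPpos : (P.card : ℝ) ≠ 0 := by
    exact_mod_cast (Finset.card_pos.2 ⟨A₀, by simpa [P] using hA₀⟩).ne'
  rw [Finset.sum_congr rfl hw, Finset.sum_const, nsmul_eq_mul, hn]
  field_simp
  push_cast
  rfl

theorem ballIso_iff_exists_enum :
    BallIso E x r m A ↔ ∃ f : Fin (m + 1) → V, f 0 = x ∧ (∀ i, f i ∈ ballRel E r x) ∧
      Function.Injective f ∧ ballRel E r x ⊆ range f ∧
      ∀ i j, E (f i) (f j) ↔ A i j := by
  constructor
  · rintro ⟨e, hroot, hadj⟩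
    refine ⟨fun i => e.symm i, (hroot _).2 (e.apply_symm_apply 0), fun i => (e.symm i).2,
      Subtype.val_injective.comp e.symm.injective, fun z hz => ⟨e ⟨z, hz⟩, by simp⟩,
      fun i j => by simpa using hadj (e.symm i) (e.symm j)⟩
  · rintro ⟨f, hroot, hmem, hinj, hsurj, hadj⟩
    let g := Equiv.ofBijective (fun i => (⟨f i, hmem i⟩ : ballRel E r x))
      ⟨fun i j h => hinj (congrArg Subtype.val h),
        fun z => (hsurj z.2).imp fun i hi => Subtype.ext hi⟩
    have hg : ∀ y : ballRel E r x, (y : V) = f (g.symm y) := fun y =>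
      congrArg Subtype.val (g.apply_symm_apply y).symm
    refine ⟨g.symm, fun y => ?_, fun y z => by rw [hg y, hg z, hadj]⟩
    rw [hg y, ← hinj.eq_iff, hroot]

end Patterns

section Measurability

universe u

/-- The bounded-multiplicity case of the Lusin–Novikov theorem. -/
theorem MeasurableSet.image_fst_of_encard_le {X Y : Type u} [MeasurableSpace X]
    [StandardBorelSpace X] [MeasurableSpace Y] [StandardBorelSpace Y] {F : Set (X × Y)}
    (hF : MeasurableSet F) (k : ℕ) (hsec : ∀ x, {y | (x, y) ∈ F}.encard ≤ k) :
    MeasurableSet (Prod.fst '' F) := by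
  induction k generalizing X with
  | zero =>
    have : F = ∅ := eq_empty_of_forall_notMem fun p hp =>
      (encard_eq_zero.1 (nonpos_iff_eq_zero.1 (hsec p.1))).subset hp
    simp [this]
  | succ k ih =>
    obtain ⟨ι, hι⟩ := exists_measurableEmbedding_real Y
    -- the points of `F` that are not `ι`-least in their section; its sections lose a point
    let B : Set (X × Y) :=
      Prod.fst '' {q : (X × Y) × Y | q.1 ∈ F ∧ (q.1.1, q.2) ∈ F ∧ ι q.2 < ι q.1.2}
    have hB : MeasurableSet B := by
      refine ih ((measurable_fst hF).inter (((measurable_fst.fst.prodMk measurable_snd) hF).inter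
        (measurableSet_lt (hι.measurable.comp measurable_snd)
          (hι.measurable.comp measurable_fst.snd)))) fun p => ?_
      by_cases hp : p ∈ F
      · have hsec' := hsec p.1
        rw [← encard_sdiff_singleton_add_one (show p.2 ∈ {y | (p.1, y) ∈ F} from hp),
          Nat.cast_add, Nat.cast_one, ENat.add_le_add_iff_right ENat.one_ne_top] at hsec'
        refine (encard_le_encard (t := {y | (p.1, y) ∈ F} \ {p.2})
          fun y hy => ⟨hy.2.1, ?_⟩).trans hsec'
        rintro rfl
        exact lt_irrefl _ hy.2.2
      · simp [hp]
    have hinj : InjOn Prod.fst (F \ B) := by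
      rintro ⟨x, y⟩ ⟨hF₁, hB₁⟩ ⟨x', y'⟩ ⟨hF₂, hB₂⟩ (rfl : x = x')
      by_contra hne
      rcases lt_or_gt_of_ne (hι.injective.ne fun h => hne (congrArg (Prod.mk x) h)) with h | h
      · exact hB₂ ⟨((x, y'), y), ⟨hF₂, hF₁, h⟩, rfl⟩
      · exact hB₁ ⟨((x, y), y'), ⟨hF₁, hF₂, h⟩, rfl⟩
    suffices Prod.fst '' F = Prod.fst '' (F \ B) from
      this ▸ (hF.diff hB).image_of_measurable_injOn measurable_fst hinj
    refine (image_mono sdiff_subset).antisymm' ?_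
    rintro _ ⟨⟨x, y⟩, hxy, rfl⟩
    obtain ⟨y₀, hy₀, hmin⟩ := exists_min_image {y | (x, y) ∈ F} ι
      (finite_of_encard_le_coe (hsec x)) ⟨y, hxy⟩
    refine ⟨(x, y₀), ⟨hy₀, ?_⟩, rfl⟩
    rintro ⟨⟨_, q⟩, ⟨_, hq, hlt⟩, rfl⟩
    exact (hmin q hq).not_gt hlt

variable {J : Type u} [MeasurableSpace J] [StandardBorelSpace J] {E : J → J → Prop} {D : ℕ}

theorem measurableSet_setOf_mem_ballRel (hE : MeasurableSet {p : J × J | E p.1 p.2})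
    (hdeg : ∀ z, {y | E z y}.encard ≤ D) (r : ℕ) :
    MeasurableSet {p : J × J | p.2 ∈ ballRel E r p.1} := by
  induction r with
  | zero => exact measurableSet_eq_fun measurable_snd measurable_fst
  | succ r ih =>
    have hstep : {p : J × J | p.2 ∈ ballRel E (r + 1) p.1} = {p | p.2 ∈ ballRel E r p.1} ∪
        Prod.fst '' {q : (J × J) × J | q.2 ∈ ballRel E r q.1.1 ∧ E q.2 q.1.2} := by
      ext ⟨x, y⟩
      simp [ballRel]
    rw [hstep]
    refine ih.union (MeasurableSet.image_fst_of_encard_le ?_ _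
      fun p => (encard_le_encard fun z hz => hz.1).trans (encard_ballRel_le hdeg r p.1))
    exact ((measurable_fst.fst.prodMk measurable_snd) ih).inter
      ((measurable_snd.prodMk measurable_fst.snd) hE)

theorem measurableSet_setOf_ballRel_subset_range (hE : MeasurableSet {p : J × J | E p.1 p.2})
    (hdeg : ∀ z, {y | E z y}.encard ≤ D) (r n : ℕ) :
    MeasurableSet {q : J × (Fin n → J) | ballRel E r q.1 ⊆ range q.2} := by
  have : {q : J × (Fin n → J) | ballRel E r q.1 ⊆ range q.2} =
      (Prod.fst '' {p : (J × (Fin n → J)) × J |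
        p.2 ∈ ballRel E r p.1.1 ∧ ∀ i, p.1.2 i ≠ p.2})ᶜ := by
    ext q
    simp [subset_def]
  have hmiss : MeasurableSet {p : (J × (Fin n → J)) × J | ∀ i, p.1.2 i ≠ p.2} := by
    simp only [ofPred_forall]
    exact .iInter fun i =>
      (measurableSet_eq_fun ((measurable_pi_apply i).comp measurable_fst.snd) measurable_snd).compl
  rw [this]
  exact (MeasurableSet.image_fst_of_encard_le
    (((measurable_fst.fst.prodMk measurable_snd) (measurableSet_setOf_mem_ballRel hE hdeg r)).inter
      hmiss) _ fun q =>
        (encard_le_encard fun z hz => hz.1).trans (encard_ballRel_le hdeg r q.1)).compl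

theorem measurableSet_setOf_ballIso (hE : MeasurableSet {p : J × J | E p.1 p.2})
    (hdeg : ∀ z, {y | E z y}.encard ≤ D) (r m : ℕ)
    (A : Fin (m + 1) → Fin (m + 1) → Prop) : MeasurableSet {x | BallIso E x r m A} := by
  have hball := measurableSet_setOf_mem_ballRel hE hdeg r
  have hev : ∀ i, Measurable fun q : J × (Fin (m + 1) → J) => q.2 i :=
    fun i => (measurable_pi_apply i).comp measurable_snd
  let W := {q : J × (Fin (m + 1) → J) | q.2 0 = q.1 ∧ (∀ i, q.2 i ∈ ballRel E r q.1) ∧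
    Function.Injective q.2 ∧ ballRel E r q.1 ⊆ range q.2 ∧
    ∀ i j, E (q.2 i) (q.2 j) ↔ A i j}
  have hmem : MeasurableSet {q : J × (Fin (m + 1) → J) | ∀ i, q.2 i ∈ ballRel E r q.1} := by
    simp only [ofPred_forall]
    exact .iInter fun i => (measurable_fst.prodMk (hev i)) hball
  have hinj : MeasurableSet {q : J × (Fin (m + 1) → J) | Function.Injective q.2} := by
    simp only [Function.Injective, ofPred_forall]
    exact .iInter fun i => .iInter fun j => (measurableSet_eq_fun (hev i) (hev j)).imp (.const _)
  have hadj : MeasurableSet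
      {q : J × (Fin (m + 1) → J) | ∀ i j, E (q.2 i) (q.2 j) ↔ A i j} := by
    simp only [ofPred_forall]
    exact .iInter fun i => .iInter fun j => (((hev i).prodMk (hev j)) hE).iff (.const _)
  have hW : MeasurableSet W := (measurableSet_eq_fun (hev 0) measurable_fst).inter
    (hmem.inter (hinj.inter ((measurableSet_setOf_ballRel_subset_range hE hdeg r _).inter hadj)))
  have hWsec : ∀ x, {f | (x, f) ∈ W}.encard ≤ (((D + 1) ^ r) ^ (m + 1) : ℕ) := fun x =>
    calc {f | (x, f) ∈ W}.encard ≤ (Set.pi univ fun _ => ballRel E r x).encard :=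
          encard_le_encard fun f hf i _ => hf.2.1 i
      _ ≤ (((D + 1) ^ r) ^ (m + 1) : ℕ) := by
          rw [encard_pi_eq_prod_encard, Finset.prod_const, Finset.card_univ, Fintype.card_fin]
          push_cast
          gcongr
          exact_mod_cast encard_ballRel_le hdeg r x
  have : {x | BallIso E x r m A} = Prod.fst '' W := by
    ext x
    simp [ballIso_iff_exists_enum, W]
  exact this ▸ hW.image_fst_of_encard_le _ hWsec

end Measurability

section Averages

theorem abs_sum_div_card_sub_sum_div_card_le {ι : Type*} [Fintype ι] {f g : ι → ℝ} {c : ℝ}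
    (hc : 0 ≤ c) (hfg : ∀ i, |f i - g i| ≤ c) :
    |(∑ i, f i) / Fintype.card ι - (∑ i, g i) / Fintype.card ι| ≤ c := by
  rw [← sub_div, ← Finset.sum_sub_distrib, abs_div, Nat.abs_cast]
  refine div_le_of_le_mul₀ (Nat.cast_nonneg _) hc ?_
  calc |∑ i, (f i - g i)| ≤ ∑ i, |f i - g i| := Finset.abs_sum_le_sum_abs _ _
    _ ≤ ∑ _i : ι, c := Finset.sum_le_sum fun i _ => hfg i
    _ = c * Fintype.card ι := by rw [Finset.sum_const, nsmul_eq_mul, mul_comm, Finset.card_univ]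

theorem tendstoUniformly_sum_one_div_ncard_ballRel_div_card {ι : Type*} {V : ι → Type*}
    [∀ n, Fintype (V n)] {E : ∀ n, V n → V n → Prop} {D : ℕ}
    (hdeg : ∀ n (z : V n), {y | E n z y}.encard ≤ D) :
    TendstoUniformly
      (fun (r : ℕ) n => (∑ u, 1 / ((ballRel (E n) r u).ncard : ℝ)) / Fintype.card (V n))
      (fun n => (∑ u, 1 / (Nat.card (compoRel (E n) u) : ℝ)) / Fintype.card (V n)) atTop := by
  rw [Metric.tendstoUniformly_iff]
  intro ε hε
  filter_upwards [tendsto_one_div_add_atTop_nhds_zero_nat.eventually (gt_mem_nhds hε)] with r hr n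
  rw [Real.dist_eq, abs_sub_comm]
  exact (abs_sum_div_card_sub_sum_div_card_le (by positivity)
    fun u => abs_one_div_ncard_ballRel_sub_le (hdeg n) r u).trans_lt hr

theorem sum_one_div_ncard_ballRel_div_card_eq {V : Type*} [Fintype V] {E : V → V → Prop}
    {D M : ℕ} (hdeg : ∀ z, {y | E z y}.encard ≤ D) (r : ℕ) (hM : (D + 1) ^ r ≤ M) :
    (∑ u, 1 / ((ballRel E r u).ncard : ℝ)) / Fintype.card V = ∑ m ∈ Finset.range M, ∑ A,
      patternWeight A * ((Nat.card {u // BallIso E u r m A} : ℝ) / Fintype.card V) := by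
  classical
  simp_rw [one_div_ncard_ballRel_eq_sum hdeg hM, Finset.sum_div, ← mul_div_assoc]
  rw [Finset.sum_comm]
  refine Finset.sum_congr rfl fun m _ => ?_
  rw [Finset.sum_comm]
  refine Finset.sum_congr rfl fun A _ => ?_
  rw [← Finset.sum_div, Finset.sum_indicator_eq_sum_filter]
  simp [mul_comm, Fintype.card_subtype]

variable {J : Type*} [MeasurableSpace J] [StandardBorelSpace J] {E : J → J → Prop} {D M : ℕ}

theorem measurable_one_div_ncard_ballRel (hE : MeasurableSet {p : J × J | E p.1 p.2})
    (hdeg : ∀ z, {y | E z y}.encard ≤ D) (r : ℕ) :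
    Measurable fun x => 1 / ((ballRel E r x).ncard : ℝ) := by
  simp_rw [one_div_ncard_ballRel_eq_sum hdeg le_rfl]
  exact Finset.measurable_sum _ fun m _ => Finset.measurable_sum _ fun A _ =>
    measurable_const.indicator (measurableSet_setOf_ballIso hE hdeg r m A)

theorem integral_one_div_ncard_ballRel_eq (μ : Measure J) [IsFiniteMeasure μ]
    (hE : MeasurableSet {p : J × J | E p.1 p.2}) (hdeg : ∀ z, {y | E z y}.encard ≤ D)
    (r : ℕ) (hM : (D + 1) ^ r ≤ M) :
    ∫ x, 1 / ((ballRel E r x).ncard : ℝ) ∂μ =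
      ∑ m ∈ Finset.range M, ∑ A, patternWeight A * μ.real {x | BallIso E x r m A} := by
  have hint : ∀ m A, Integrable ({x | BallIso E x r m A}.indicator fun _ => patternWeight A) μ :=
    fun m A => (integrable_const _).indicator (measurableSet_setOf_ballIso hE hdeg r m A)
  simp_rw [one_div_ncard_ballRel_eq_sum hdeg hM]
  rw [integral_finsetSum _ fun m _ => integrable_finsetSum _ fun A _ => hint m A]
  refine Finset.sum_congr rfl fun m _ => ?_
  rw [integral_finsetSum _ fun A _ => hint m A]
  refine Finset.sum_congr rfl fun A _ => ?_
  rw [integral_indicator_const _ (measurableSet_setOf_ballIso hE hdeg r m A), smul_eq_mul,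
    mul_comm]

theorem tendsto_integral_one_div_ncard_ballRel (μ : Measure J) [IsFiniteMeasure μ]
    (hE : MeasurableSet {p : J × J | E p.1 p.2}) (hdeg : ∀ z, {y | E z y}.encard ≤ D) :
    Tendsto (fun r : ℕ => ∫ x, 1 / ((ballRel E r x).ncard : ℝ) ∂μ) atTop
      (nhds (∫ x, 1 / (Nat.card (compoRel E x) : ℝ) ∂μ)) :=
  tendsto_integral_of_dominated_convergence (fun _ => 1)
    (fun r => (measurable_one_div_ncard_ballRel hE hdeg r).aestronglyMeasurable)
    (integrable_const 1)
    (fun r => ae_of_all _ fun x => by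
      rw [Real.norm_of_nonneg (by positivity), one_div]
      exact Nat.cast_inv_le_one _)
    (ae_of_all _ (tendsto_one_div_ncard_ballRel hdeg))

end Averages

theorem finTotalRank_tendsto_totalRank_general {J : Type*} [MeasurableSpace J]
    [StandardBorelSpace J] (G : Graphing J) (D : ℕ)
    (V : ℕ → Type*) [∀ n, Fintype (V n)]
    (En : ∀ n, V n → V n → Prop)
    (hdeg : ∀ n (x : V n), ({y | En n x y}).ncard ≤ D)
    (hconv : ∀ (r m : ℕ) (A : Fin (m + 1) → Fin (m + 1) → Prop),
      Filter.Tendsto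
        (fun n => (Nat.card {u : V n // BallIso (En n) u r m A} : ℝ) /
          (Fintype.card (V n)))
        Filter.atTop
        (nhds ((G.μ {x | BallIso G.E x r m A}).toReal))) :
    Filter.Tendsto (fun n => finTotalRank (V n) (En n)) Filter.atTop
      (nhds (1 - ∫ x, (1 : ℝ) / (Nat.card ↥(compoRel G.E x)) ∂G.μ)) := by
  have := G.prob
  have hdegV : ∀ n (x : V n), {y | En n x y}.encard ≤ D := fun n x =>
    encard_le_coe_iff_finite_ncard_le.2 ⟨toFinite _, hdeg n x⟩
  have hdegG : ∀ x, {y | G.E x y}.encard ≤ G.D := fun x =>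
    encard_le_coe_iff_finite_ncard_le.2 ⟨G.degFin x, G.degBound x⟩
  have hball : ∀ r, Tendsto
      (fun n => (∑ u, 1 / ((ballRel (En n) r u).ncard : ℝ)) / Fintype.card (V n)) atTop
      (nhds (∫ x, 1 / ((ballRel G.E r x).ncard : ℝ) ∂G.μ)) := fun r => by
    simp_rw [sum_one_div_ncard_ballRel_div_card_eq (hdegV _) r (le_max_left _ ((G.D + 1) ^ r)),
      integral_one_div_ncard_ballRel_eq G.μ G.measE hdegG r (le_max_right ((D + 1) ^ r) _)]
    exact tendsto_finsetSum _ fun m _ => tendsto_finsetSum _ fun A _ =>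
      (hconv r m A).const_mul _
  refine Tendsto.const_sub 1 ?_
  exact (tendstoUniformly_sum_one_div_ncard_ballRel_div_card hdegV).tendsto_of_eventually_tendsto
    (Eventually.of_forall hball) (tendsto_integral_one_div_ncard_ballRel G.μ G.measE hdegG)

/-- If a sequence of finite graphs `Gₙ` with degrees uniformly bounded
by `D` locally (Benjamini–Schramm) converges to a graphing `G` — i.e. for every radius
and every rooted pattern, the probability that the rooted ball around a uniform random
node of `Gₙ` is isomorphic to the pattern converges to the corresponding probability for
a `λ`-random point of `G` — then the normalized total ranks converge:
`r̄(Gₙ) → r̄(G) = 1 − E_x(1/|V(G_x)|)`. -/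
theorem finTotalRank_tendsto_totalRank {J : Type*} [MeasurableSpace J]
    [StandardBorelSpace J] (G : Graphing J) (D : ℕ)
    (V : ℕ → Type*) [∀ n, Fintype (V n)] [∀ n, Nonempty (V n)]
    (En : ∀ n, V n → V n → Prop)
    (hsymm : ∀ n x y, En n x y → En n y x)
    (hdeg : ∀ n (x : V n), ({y | En n x y}).ncard ≤ D)
    (hdegG : ∀ x : J, ({y | G.E x y}).ncard ≤ D)
    (hconv : ∀ (r m : ℕ) (A : Fin (m + 1) → Fin (m + 1) → Prop),
      Filter.Tendsto
        (fun n => (Nat.card {u : V n // BallIso (En n) u r m A} : ℝ) /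
          (Fintype.card (V n)))
        Filter.atTop
        (nhds ((G.μ {x | BallIso G.E x r m A}).toReal))) :
    Filter.Tendsto (fun n => finTotalRank (V n) (En n)) Filter.atTop
      (nhds (1 - ∫ x, (1 : ℝ) / (Nat.card ↥(compoRel G.E x)) ∂G.μ)) :=
  finTotalRank_tendsto_totalRank_general G D V En hdeg hconv
end
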